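/- arXiv:2512.08590 — 5 statements merged into one kernel-verified Lean document; each statement's English description precedes it below -/
import Mathlib

section
/- Let M be a finite-dimensional, σ-compact, Hausdorff smooth real manifold without boundary and let {·,·} be a Poisson bracket on C^∞(M,ℝ). Then for every x ∈ M the value {f,g}(x) depends only on the differentials of f and g at x: if f, f₂, g, g₂ ∈ C^∞(M,ℝ) satisfy mfderiv f x = mfderiv f₂ x and mfderiv g x = mfderiv g₂ x, then {f,g}(x) = {f₂,g₂}(x). (This is the pointwise content of the paper's main factorization theorem in the case where the model space is ℝⁿ, which trivially has the bornological approximation property, and where σ-compactness guarantees smooth paracompactness.) -/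
open scoped Manifold

open MeasureTheory Set
open scoped Convolution

/-- Smoothness of a parametric interval integral with smooth integrand, via convolution. -/
theorem contDiff_parametric_intervalIntegral
    {E : Type*} [NormedAddCommGroup E] [NormedSpace ℝ E]
    (F : E × ℝ → ℝ) (hF : ContDiff ℝ (⊤ : ℕ∞) F) :
    ContDiff ℝ (⊤ : ℕ∞) (fun y => ∫ t in (0:ℝ)..1, F (y, t)) := by
  -- bump on ℝ equal to 1 on [-1,0]
  let χ : ContDiffBump (-(1/2) : ℝ) := ⟨1/2, 1, by norm_num, by norm_num⟩
  have hrIn : χ.rIn = 1/2 := rfl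
  set f0 : ℝ → ℝ := indicator (Icc (0:ℝ) 1) 1 with hf0
  set g : E → ℝ → ℝ := fun p u => χ u * F (p, -u) with hg
  have hgs : ∀ p, ∀ u : ℝ, p ∈ (univ : Set E) → u ∉ Metric.closedBall (-(1/2):ℝ) χ.rOut →
      g p u = 0 := by
    intro p u _ hu
    have : χ u = 0 := by
      apply χ.zero_of_le_dist
      simp only [Metric.mem_closedBall, not_le, dist_comm] at hu ⊢
      exact hu.le
    simp [hg, this]
  have hf0i : LocallyIntegrable f0 volume := by
    have : Integrable f0 volume := by
      rw [hf0, integrable_indicator_iff measurableSet_Icc]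
      exact integrableOn_const measure_Icc_lt_top.ne
    exact this.locallyIntegrable
  have hgc : ContDiff ℝ (⊤ : ℕ∞) (Function.uncurry g) := by
    apply ContDiff.mul
    · exact χ.contDiff.comp contDiff_snd
    · exact hF.comp (contDiff_fst.prodMk contDiff_snd.neg)
  have key := contDiffOn_convolution_right_with_param
    (𝕜 := ℝ) (μ := (volume : Measure ℝ)) (ContinuousLinearMap.mul ℝ ℝ)
    isOpen_univ (isCompact_closedBall _ _) hgs hf0i (hgc.contDiffOn)
  have key2 : ContDiff ℝ (⊤ : ℕ∞) (fun y : E => (f0 ⋆[ContinuousLinearMap.mul ℝ ℝ, volume] g y) 0) := by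
    rw [← contDiffOn_univ]
    have : (fun y : E => (f0 ⋆[ContinuousLinearMap.mul ℝ ℝ, volume] g y) 0)
        = (fun q : E × ℝ => (f0 ⋆[ContinuousLinearMap.mul ℝ ℝ, volume] g q.1) q.2) ∘ (fun y => (y, 0)) := rfl
    rw [this]
    exact key.comp (contDiff_id.prodMk contDiff_const).contDiffOn
      (by intro y _; exact ⟨trivial, trivial⟩)
  convert key2 using 2 with y
  rw [convolution]
  have : ∀ u : ℝ, (ContinuousLinearMap.mul ℝ ℝ) (f0 u) (g y (0 - u))
      = indicator (Icc (0:ℝ) 1) (fun t => F (y, t)) u := by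
    intro u
    by_cases hu : u ∈ Icc (0:ℝ) 1
    · have h1 : f0 u = 1 := by simp [hf0, hu]
      have h2 : χ (-u) = 1 := by
        apply χ.one_of_mem_closedBall
        simp only [Metric.mem_closedBall, hrIn]
        rw [Real.dist_eq]
        obtain ⟨h3, h4⟩ := hu
        rw [abs_le]; constructor <;> linarith
      simp [hg, h1, h2, indicator_of_mem hu, ContinuousLinearMap.mul_apply']
    · have h1 : f0 u = 0 := by simp [hf0, indicator_of_notMem hu]
      simp [h1, indicator_of_notMem hu]
  simp_rw [this]
  rw [integral_indicator measurableSet_Icc,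
    intervalIntegral.integral_of_le (zero_le_one), ← integral_Icc_eq_integral_Ioc]

theorem hadamard_decomposition
    {E : Type*} [NormedAddCommGroup E] [NormedSpace ℝ E] [FiniteDimensional ℝ E]
    (k : E → ℝ) (hk : ContDiff ℝ (⊤ : ℕ∞) k) (e : E) (hke : k e = 0)
    (hdk : fderiv ℝ k e = 0) :
    ∃ (n : ℕ) (u v : Fin n → E → ℝ),
      (∀ i, ContDiff ℝ (⊤ : ℕ∞) (u i)) ∧ (∀ i, ContDiff ℝ (⊤ : ℕ∞) (v i)) ∧
      (∀ i, u i e = 0) ∧ (∀ i, v i e = 0) ∧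
      (∀ y, k y = ∑ i, u i y * v i y) := by
  have hT1 : (1 : WithTop ℕ∞) ≤ ((⊤ : ℕ∞) : WithTop ℕ∞) := by exact_mod_cast le_top
  have hT2 : ((⊤ : ℕ∞) : WithTop ℕ∞) + 1 ≤ ((⊤ : ℕ∞) : WithTop ℕ∞) := by
    exact_mod_cast le_top
  set n := Module.finrank ℝ E with hn
  set b := Module.finBasis ℝ E with hb
  set bc : Fin n → E →L[ℝ] ℝ := fun i => LinearMap.toContinuousLinearMap (b.coord i) with hbc
  refine ⟨n, fun i y => bc i (y - e),
    fun i y => ∫ t in (0:ℝ)..1, fderiv ℝ k (e + t • (y - e)) (b i), ?_, ?_, ?_, ?_, ?_⟩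
  · intro i
    exact (bc i).contDiff.comp (contDiff_id.sub contDiff_const)
  · intro i
    apply contDiff_parametric_intervalIntegral (fun q : E × ℝ => fderiv ℝ k (e + q.2 • (q.1 - e)) (b i))
    exact ContDiff.clm_apply ((hk.fderiv_right hT2).comp
      (contDiff_const.add (contDiff_snd.smul (contDiff_fst.sub contDiff_const)))) contDiff_const
  · intro i; simp
  · intro i; simp [hdk]
  · intro y
    symm
    have hcont : ∀ w : E, Continuous fun t : ℝ => fderiv ℝ k (e + t • (y - e)) w := by
      intro w
      exact ((hk.continuous_fderiv (zero_lt_one.trans_le hT1).ne').comp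
        (continuous_const.add (continuous_id.smul continuous_const))).clm_apply continuous_const
    have ftc : ∫ t in (0:ℝ)..1, fderiv ℝ k (e + t • (y - e)) (y - e) = k y := by
      have hder : ∀ t ∈ Set.uIcc (0:ℝ) 1,
          HasDerivAt (fun s : ℝ => k (e + s • (y - e)))
            (fderiv ℝ k (e + t • (y - e)) (y - e)) t := by
        intro t _
        have h1 : HasDerivAt (fun s : ℝ => e + s • (y - e)) (y - e) t := by
          simpa using ((hasDerivAt_id t).smul_const (y - e)).const_add e
        exact ((hk.differentiable (zero_lt_one.trans_le hT1).ne') _).hasFDerivAt.comp_hasDerivAt t h1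
      have := intervalIntegral.integral_eq_sub_of_hasDerivAt hder
        ((hcont (y - e)).intervalIntegrable 0 1)
      simpa [hke] using this
    calc ∑ i, bc i (y - e) * ∫ t in (0:ℝ)..1, fderiv ℝ k (e + t • (y - e)) (b i)
        = ∑ i, ∫ t in (0:ℝ)..1, bc i (y - e) * fderiv ℝ k (e + t • (y - e)) (b i) := by
          simp_rw [intervalIntegral.integral_const_mul]
      _ = ∫ t in (0:ℝ)..1, ∑ i, bc i (y - e) * fderiv ℝ k (e + t • (y - e)) (b i) := by
          rw [intervalIntegral.integral_finset_sum]
          intro i _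
          exact ((continuous_const.mul (hcont (b i)))).intervalIntegrable 0 1
      _ = ∫ t in (0:ℝ)..1, fderiv ℝ k (e + t • (y - e)) (y - e) := by
          congr 1; funext t
          have : ∀ i : Fin n, bc i (y - e) * fderiv ℝ k (e + t • (y - e)) (b i)
              = fderiv ℝ k (e + t • (y - e)) (b.repr (y - e) i • b i) := by
            intro i
            simp [hbc, Module.Basis.coord_apply, smul_eq_mul]
          simp_rw [this]
          rw [← map_sum, b.sum_repr]
      _ = k y := ftc


theorem pointDeriv_vanish
    {E : Type*} [NormedAddCommGroup E] [NormedSpace ℝ E] [FiniteDimensional ℝ E]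
    {H : Type*} [TopologicalSpace H] (I : ModelWithCorners ℝ E H) [I.Boundaryless]
    {M : Type*} [TopologicalSpace M] [ChartedSpace H M] [IsManifold I (⊤ : ℕ∞) M]
    [T2Space M]
    (x : M) (D : (M → ℝ) → ℝ)
    (Dadd : ∀ f₁ f₂, ContMDiff I 𝓘(ℝ) (⊤ : ℕ∞) f₁ → ContMDiff I 𝓘(ℝ) (⊤ : ℕ∞) f₂ →
      D (f₁ + f₂) = D f₁ + D f₂)
    (Dsmul : ∀ (c : ℝ) f, ContMDiff I 𝓘(ℝ) (⊤ : ℕ∞) f → D (c • f) = c * D f)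
    (Dmul : ∀ f₁ f₂, ContMDiff I 𝓘(ℝ) (⊤ : ℕ∞) f₁ → ContMDiff I 𝓘(ℝ) (⊤ : ℕ∞) f₂ →
      D (f₁ * f₂) = D f₁ * f₂ x + f₁ x * D f₂)
    (h : M → ℝ) (hh : ContMDiff I 𝓘(ℝ) (⊤ : ℕ∞) h) (hd : mfderiv I 𝓘(ℝ) h x = 0) :
    D h = 0 := by
  -- D kills the zero function
  have D0 : D (0 : M → ℝ) = 0 := by
    have := Dsmul 0 (0 : M → ℝ) contMDiff_const
    simpa using this
  -- D kills constants
  have Dconst : ∀ c : ℝ, D (fun _ => c) = 0 := by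
    have D1 : D (1 : M → ℝ) = 0 := by
      have h1 := Dmul 1 1 contMDiff_const contMDiff_const
      simp only [mul_one, Pi.one_apply, one_mul] at h1
      linarith
    intro c
    have := Dsmul c (1 : M → ℝ) contMDiff_const
    have hc : c • (1 : M → ℝ) = fun _ => c := by funext p; simp
    rw [hc] at this
    rw [this, D1, mul_zero]
  -- locality
  have Dlocal : ∀ w : M → ℝ, ContMDiff I 𝓘(ℝ) (⊤ : ℕ∞) w → (∀ᶠ p in nhds x, w p = 0) → D w = 0 := by
    intro w hw hev
    obtain ⟨U, hU, hUopen, hxU⟩ := eventually_nhds_iff.1 hev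
    obtain ⟨χ, -, hχsub⟩ :=
      ((SmoothBumpFunction.nhds_basis_tsupport (I := I) x).mem_iff).1 (hUopen.mem_nhds hxU)
    have hzero : (⇑χ : M → ℝ) * w = 0 := by
      funext p
      by_cases hp : p ∈ U
      · simp [hU p hp]
      · have : χ p = 0 := image_eq_zero_of_notMem_tsupport (fun hc => hp (hχsub hc))
        simp [this]
    have hD := Dmul (⇑χ) w χ.contMDiff hw
    rw [hzero, D0] at hD
    have hwx : w x = 0 := hU x hxU
    have hχx : χ x = 1 := χ.eq_one
    rw [hwx, hχx, mul_zero, one_mul, zero_add] at hD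
    exact hD.symm
  -- reduce to the case h x = 0
  have main : ∀ h0 : M → ℝ, ContMDiff I 𝓘(ℝ) (⊤ : ℕ∞) h0 → h0 x = 0 →
      mfderiv I 𝓘(ℝ) h0 x = 0 → D h0 = 0 := by
    intro h0 hh0 hh0x hd0
    set φ := extChartAt I x with hφ
    set e := φ x with he
    have htarget : IsOpen φ.target := isOpen_extChartAt_target x
    have hetarget : e ∈ φ.target := (extChartAt I x).map_source (mem_extChartAt_source x)
    obtain ⟨r, hr, hball⟩ := Metric.isOpen_iff.1 htarget e hetarget
    set ι : ContDiffBump e := ⟨r / 4, r / 2, by positivity, by linarith⟩ with hι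
    have hιsupp : tsupport (⇑ι) ⊆ φ.target := by
      rw [ι.tsupport_eq]
      refine subset_trans ?_ hball
      intro z hz
      rw [Metric.mem_closedBall] at hz
      rw [Metric.mem_ball]
      have : ι.rOut = r / 2 := rfl
      rw [this] at hz
      linarith
    set k : E → ℝ := fun y => ι y * h0 (φ.symm y) with hk
    have hsymm : ContDiffOn ℝ (⊤ : ℕ∞) (fun y => h0 (φ.symm y)) φ.target := by
      have := hh0.comp_contMDiffOn (contMDiffOn_extChartAt_symm (I := I) x)
      exact contMDiffOn_iff_contDiffOn.1 this
    have hkC : ContDiff ℝ (⊤ : ℕ∞) k := by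
      rw [contDiff_iff_contDiffAt]
      intro y
      by_cases hy : y ∈ φ.target
      · exact ι.contDiff.contDiffAt.mul ((hsymm y hy).contDiffAt (htarget.mem_nhds hy))
      · have hev : ∀ᶠ z in nhds y, k z = 0 := by
          have hyc : y ∈ (tsupport (⇑ι))ᶜ := fun hc => hy (hιsupp hc)
          filter_upwards [(isClosed_tsupport (⇑ι)).isOpen_compl.mem_nhds hyc] with z hz
          simp [hk, image_eq_zero_of_notMem_tsupport hz]
        exact contDiffAt_const.congr_of_eventuallyEq hev
    have hψe : φ.symm e = x := extChartAt_to_inv x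
    have hke : k e = 0 := by simp [hk, hψe, hh0x]
    have hkev : k =ᶠ[nhds e] fun y => h0 (φ.symm y) := by
      filter_upwards [ι.eventuallyEq_one] with z hz
      simp [hk, hz]
    have hdke : fderiv ℝ k e = 0 := by
      rw [hkev.fderiv_eq]
      have hmd : MDifferentiableAt I 𝓘(ℝ) h0 x := hh0.mdifferentiableAt (by simp)
      rw [hmd.mfderiv] at hd0
      rw [I.range_eq_univ, fderivWithin_univ] at hd0
      have hwr : writtenInExtChartAt I 𝓘(ℝ) x h0 = fun y => h0 (φ.symm y) := by
        funext y
        simp [writtenInExtChartAt, extChartAt_model_space_eq_id, hφ, chartAt_self_eq]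
      rw [hwr] at hd0
      exact hd0
    obtain ⟨n, u, v, hu, hv, hue, hve, hsum⟩ := hadamard_decomposition k hkC e hke hdke
    -- a bump function at x
    obtain ⟨χ, -, -⟩ :=
      ((SmoothBumpFunction.nhds_basis_tsupport (I := I) x).mem_iff).1 (Filter.univ_mem)
    set u' : Fin n → M → ℝ := fun i p => χ p • u i (φ p) with hu'
    set v' : Fin n → M → ℝ := fun i p => χ p • v i (φ p) with hv'
    have hu'S : ∀ i, ContMDiff I 𝓘(ℝ) (⊤ : ℕ∞) (u' i) := by
      intro i
      exact χ.contMDiff_smul ((contMDiff_iff_contDiff.2 (hu i)).comp_contMDiffOn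
        (contMDiffOn_extChartAt (I := I) (x := x)))
    have hv'S : ∀ i, ContMDiff I 𝓘(ℝ) (⊤ : ℕ∞) (v' i) := by
      intro i
      exact χ.contMDiff_smul ((contMDiff_iff_contDiff.2 (hv i)).comp_contMDiffOn
        (contMDiffOn_extChartAt (I := I) (x := x)))
    have hu'x : ∀ i, u' i x = 0 := by intro i; simp [hu', ← he, hue i]
    have hv'x : ∀ i, v' i x = 0 := by intro i; simp [hv', ← he, hve i]
    -- smoothness of partial sums
    have hsumS : ∀ s : Finset (Fin n), ContMDiff I 𝓘(ℝ) (⊤ : ℕ∞) (∑ i ∈ s, u' i * v' i) := by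
      intro s
      induction s using Finset.induction_on with
      | empty => rw [Finset.sum_empty]; exact contMDiff_const
      | insert _ _ hnm ih =>
        rw [Finset.sum_insert hnm]
        exact ((hu'S _).mul (hv'S _)).add ih
    have hDsum : ∀ s : Finset (Fin n), D (∑ i ∈ s, u' i * v' i) = 0 := by
      intro s
      induction s using Finset.induction_on with
      | empty => simpa using D0
      | insert _ _ hnm ih =>
        rw [Finset.sum_insert hnm]
        rw [Dadd _ _ ((hu'S _).mul (hv'S _)) (hsumS _), ih]
        rw [Dmul _ _ (hu'S _) (hv'S _), hu'x, hv'x]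
        ring
    set S : M → ℝ := ∑ i : Fin n, u' i * v' i with hS
    have hSsm : ContMDiff I 𝓘(ℝ) (⊤ : ℕ∞) S := hsumS _
    have hDS : D S = 0 := hDsum _
    -- h0 agrees with S near x
    have hnear : ∀ᶠ p in nhds x, h0 p - S p = 0 := by
      have h1 : ∀ᶠ p in nhds x, χ p = 1 := χ.eventuallyEq_one
      have h2 : ∀ᶠ p in nhds x, p ∈ φ.source := extChartAt_source_mem_nhds x
      have h3 : ∀ᶠ p in nhds x, φ p ∈ Metric.closedBall e (r / 4) := by
        have hc : ContinuousAt φ x := continuousAt_extChartAt x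
        have : Metric.closedBall e (r / 4) ∈ nhds e :=
          Metric.closedBall_mem_nhds e (by positivity)
        exact hc this
      filter_upwards [h1, h2, h3] with p hp1 hp2 hp3
      have hι1 : ι (φ p) = 1 := ι.one_of_mem_closedBall hp3
      have hSp : S p = k (φ p) := by
        rw [hS]
        simp only [Finset.sum_apply, Pi.mul_apply]
        rw [hsum (φ p)]
        congr 1
        funext i
        simp [hu', hv', hp1]
      rw [hSp, hk]
      simp only [hι1, one_mul]
      rw [(extChartAt I x).left_inv hp2]
      ring
    have hsplit : h0 = S + (h0 - S) := by funext p; simp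
    rw [hsplit, Dadd S (h0 - S) hSsm (by exact hh0.sub hSsm), hDS, zero_add]
    apply Dlocal _ (by exact hh0.sub hSsm)
    filter_upwards [hnear] with p hp
    simpa using hp
  -- now the general case
  have hsplit : h = (fun _ => h x) + (h - fun _ => h x) := by funext p; simp
  have hconst : ContMDiff I 𝓘(ℝ) (⊤ : ℕ∞) (fun _ : M => h x) := contMDiff_const
  rw [hsplit, Dadd _ _ hconst (by exact hh.sub hconst), Dconst, zero_add]
  apply main _ (by exact hh.sub hconst) (by simp)
  rw [mfderiv_sub (hh.mdifferentiableAt (by simp)) ((contMDiff_const).mdifferentiableAt (by simp : ((⊤ : ℕ∞) : WithTop ℕ∞) ≠ 0)),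
    hd]
  simp [mfderiv_const]
  exact sub_self _



open scoped Manifold

/-- For a Poisson bracket on a finite-dimensional, σ-compact, Hausdorff smooth manifold
without boundary, the value `{f,g}(x)` depends only on the differentials of `f` and `g`
at `x`. -/
theorem poisson_bracket_depends_only_on_differentials
    {E : Type*} [NormedAddCommGroup E] [NormedSpace ℝ E] [FiniteDimensional ℝ E]
    {H : Type*} [TopologicalSpace H] (I : ModelWithCorners ℝ E H) [I.Boundaryless]
    {M : Type*} [TopologicalSpace M] [ChartedSpace H M] [IsManifold I (⊤ : ℕ∞) M]
    [SigmaCompactSpace M] [T2Space M]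
    (bracket : (M → ℝ) → (M → ℝ) → (M → ℝ))
    (hsmooth : ∀ f g, ContMDiff I 𝓘(ℝ) (⊤ : ℕ∞) f → ContMDiff I 𝓘(ℝ) (⊤ : ℕ∞) g →
      ContMDiff I 𝓘(ℝ) (⊤ : ℕ∞) (bracket f g))
    (hadd : ∀ f₁ f₂ g, ContMDiff I 𝓘(ℝ) (⊤ : ℕ∞) f₁ → ContMDiff I 𝓘(ℝ) (⊤ : ℕ∞) f₂ →
      ContMDiff I 𝓘(ℝ) (⊤ : ℕ∞) g → bracket (f₁ + f₂) g = bracket f₁ g + bracket f₂ g)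
    (hsmul : ∀ (c : ℝ) f g, ContMDiff I 𝓘(ℝ) (⊤ : ℕ∞) f → ContMDiff I 𝓘(ℝ) (⊤ : ℕ∞) g →
      bracket (c • f) g = c • bracket f g)
    (hskew : ∀ f g, ContMDiff I 𝓘(ℝ) (⊤ : ℕ∞) f → ContMDiff I 𝓘(ℝ) (⊤ : ℕ∞) g →
      bracket f g = - bracket g f)
    (hleibniz : ∀ f g h, ContMDiff I 𝓘(ℝ) (⊤ : ℕ∞) f → ContMDiff I 𝓘(ℝ) (⊤ : ℕ∞) g →
      ContMDiff I 𝓘(ℝ) (⊤ : ℕ∞) h → bracket f (g * h) = bracket f g * h + g * bracket f h)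
    (hjacobi : ∀ f g h, ContMDiff I 𝓘(ℝ) (⊤ : ℕ∞) f → ContMDiff I 𝓘(ℝ) (⊤ : ℕ∞) g →
      ContMDiff I 𝓘(ℝ) (⊤ : ℕ∞) h →
      bracket f (bracket g h) = bracket (bracket f g) h + bracket g (bracket f h))
    (x : M) (f f₂ g g₂ : M → ℝ)
    (hf : ContMDiff I 𝓘(ℝ) (⊤ : ℕ∞) f) (hf₂ : ContMDiff I 𝓘(ℝ) (⊤ : ℕ∞) f₂)
    (hg : ContMDiff I 𝓘(ℝ) (⊤ : ℕ∞) g) (hg₂ : ContMDiff I 𝓘(ℝ) (⊤ : ℕ∞) g₂)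
    (hdf : mfderiv I 𝓘(ℝ) f x = mfderiv I 𝓘(ℝ) f₂ x)
    (hdg : mfderiv I 𝓘(ℝ) g x = mfderiv I 𝓘(ℝ) g₂ x) :
    bracket f g x = bracket f₂ g₂ x := by
  -- Step 1: change the first argument
  have step1 : bracket f g x = bracket f₂ g x := by
    set D : (M → ℝ) → ℝ := fun u => bracket u g x with hD
    have Dadd : ∀ u₁ u₂, ContMDiff I 𝓘(ℝ) (⊤ : ℕ∞) u₁ → ContMDiff I 𝓘(ℝ) (⊤ : ℕ∞) u₂ →
        D (u₁ + u₂) = D u₁ + D u₂ := by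
      intro u₁ u₂ h1 h2
      have := congrFun (hadd u₁ u₂ g h1 h2 hg) x
      simpa [hD] using this
    have Dsmul : ∀ (c : ℝ) u, ContMDiff I 𝓘(ℝ) (⊤ : ℕ∞) u → D (c • u) = c * D u := by
      intro c u hu
      have := congrFun (hsmul c u g hu hg) x
      simpa [hD] using this
    have Dmul : ∀ u₁ u₂, ContMDiff I 𝓘(ℝ) (⊤ : ℕ∞) u₁ → ContMDiff I 𝓘(ℝ) (⊤ : ℕ∞) u₂ →
        D (u₁ * u₂) = D u₁ * u₂ x + u₁ x * D u₂ := by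
      intro u₁ u₂ h1 h2
      have e1 := congrFun (hskew (u₁ * u₂) g (h1.mul h2) hg) x
      have e2 := congrFun (hleibniz g u₁ u₂ hg h1 h2) x
      have e3 := congrFun (hskew g u₁ hg h1) x
      have e4 := congrFun (hskew g u₂ hg h2) x
      simp only [Pi.neg_apply, Pi.add_apply, Pi.mul_apply] at e1 e2 e3 e4
      simp only [hD, Pi.mul_apply]
      rw [e1, e2, e3, e4]
      ring
    have hsub : mfderiv I 𝓘(ℝ) (f - f₂) x = 0 := by
      rw [mfderiv_sub (hf.mdifferentiableAt (by simp)) (hf₂.mdifferentiableAt (by simp)), hdf]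
      exact sub_self _
    have hvan : D (f - f₂) = 0 :=
      pointDeriv_vanish I x D Dadd Dsmul Dmul (f - f₂) (hf.sub hf₂) hsub
    have hsplit : f = f₂ + (f - f₂) := by funext p; simp
    calc bracket f g x = D (f₂ + (f - f₂)) := by rw [← hsplit]
      _ = D f₂ + D (f - f₂) := Dadd _ _ hf₂ (by exact hf.sub hf₂)
      _ = bracket f₂ g x := by rw [hvan, add_zero]
  -- Step 2: change the second argument
  have step2 : bracket f₂ g x = bracket f₂ g₂ x := by
    set D : (M → ℝ) → ℝ := fun u => bracket f₂ u x with hD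
    have Dadd : ∀ u₁ u₂, ContMDiff I 𝓘(ℝ) (⊤ : ℕ∞) u₁ → ContMDiff I 𝓘(ℝ) (⊤ : ℕ∞) u₂ →
        D (u₁ + u₂) = D u₁ + D u₂ := by
      intro u₁ u₂ h1 h2
      have e1 := congrFun (hskew f₂ (u₁ + u₂) hf₂ (h1.add h2)) x
      have e2 := congrFun (hadd u₁ u₂ f₂ h1 h2 hf₂) x
      have e3 := congrFun (hskew f₂ u₁ hf₂ h1) x
      have e4 := congrFun (hskew f₂ u₂ hf₂ h2) x
      simp only [Pi.neg_apply, Pi.add_apply] at e1 e2 e3 e4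
      simp only [hD]
      rw [e1, e2, e3, e4]
      ring
    have Dsmul : ∀ (c : ℝ) u, ContMDiff I 𝓘(ℝ) (⊤ : ℕ∞) u → D (c • u) = c * D u := by
      intro c u hu
      have hcu : ContMDiff I 𝓘(ℝ) (⊤ : ℕ∞) (c • u) := by exact (contMDiff_const : ContMDiff I 𝓘(ℝ) (⊤ : ℕ∞) (fun _ : M => c)).smul hu
      have e1 := congrFun (hskew f₂ (c • u) hf₂ hcu) x
      have e2 := congrFun (hsmul c u f₂ hu hf₂) x
      have e3 := congrFun (hskew f₂ u hf₂ hu) x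
      simp only [Pi.neg_apply, Pi.smul_apply, smul_eq_mul] at e1 e2 e3
      simp only [hD]
      rw [e1, e2, e3]
      ring
    have Dmul : ∀ u₁ u₂, ContMDiff I 𝓘(ℝ) (⊤ : ℕ∞) u₁ → ContMDiff I 𝓘(ℝ) (⊤ : ℕ∞) u₂ →
        D (u₁ * u₂) = D u₁ * u₂ x + u₁ x * D u₂ := by
      intro u₁ u₂ h1 h2
      have := congrFun (hleibniz f₂ u₁ u₂ hf₂ h1 h2) x
      simpa [hD] using this
    have hsub : mfderiv I 𝓘(ℝ) (g - g₂) x = 0 := by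
      rw [mfderiv_sub (hg.mdifferentiableAt (by simp)) (hg₂.mdifferentiableAt (by simp)), hdg]
      exact sub_self _
    have hvan : D (g - g₂) = 0 :=
      pointDeriv_vanish I x D Dadd Dsmul Dmul (g - g₂) (hg.sub hg₂) hsub
    have hsplit : g = g₂ + (g - g₂) := by funext p; simp
    calc bracket f₂ g x = D (g₂ + (g - g₂)) := by rw [← hsplit]
      _ = D g₂ + D (g - g₂) := Dadd _ _ hg₂ (by exact hg.sub hg₂)
      _ = bracket f₂ g₂ x := by rw [hvan, add_zero]
  rw [step1, step2]
end

section
/- Let M be a finite-dimensional, σ-compact, Hausdorff smooth real manifold without boundary and let {·,·} be a Poisson bracket on C^∞(M,ℝ). Then there exists a family P assigning to each x ∈ M an ℝ-bilinear antisymmetric map P_x : T*_xM × T*_xM → ℝ on the cotangent space T*_xM (the space of continuous linear functionals on the tangent space at x) such that {f,g}(x) = P_x(df_x, dg_x) for all f, g ∈ C^∞(M,ℝ) and all x ∈ M, where df_x = mfderiv f x. (This is the factorization of the dual of the Poisson bracket through the bundle L²_skew(T*M,ℝ) asserted by the paper's main theorem, in the finite-dimensional case.) -/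
open scoped Manifold

open MeasureTheory Metric intervalIntegral Set Filter Module
open scoped ContDiff Topology

universe u

section Aux

variable {E : Type u} [NormedAddCommGroup E] [NormedSpace ℝ E] [FiniteDimensional ℝ E]

set_option synthInstance.maxHeartbeats 1000000 in
private lemma contDiff_nat_parametric_integral (n : ℕ) :
    ∀ {F : Type u} [NormedAddCommGroup F] [NormedSpace ℝ F] [CompleteSpace F]
      (Φ : ℝ × E → F), ContDiff ℝ ∞ Φ →
      ContDiff ℝ (n : WithTop ℕ∞) fun x : E => ∫ t in (0:ℝ)..1, Φ (t, x) := by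
  induction n with
  | zero =>
    intro F _ _ _ Φ hΦ
    rw [Nat.cast_zero, contDiff_zero]
    exact continuous_parametric_intervalIntegral_of_continuous'
      (f := fun (x : E) (t : ℝ) => Φ (t, x))
      (hΦ.continuous.comp (continuous_swap)) 0 1
  | succ n ih =>
    intro F _ _ _ Φ hΦ
    set Φ' : ℝ × E → E →L[ℝ] F := fun p => (fderiv ℝ Φ p).comp (ContinuousLinearMap.inr ℝ ℝ E)
      with hΦ'def
    have hΦ' : ContDiff ℝ ∞ Φ' :=
      (hΦ.fderiv_right (by norm_num)).clm_comp contDiff_const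
    have key : ∀ x₀ : E, HasFDerivAt (fun x : E => ∫ t in (0:ℝ)..1, Φ (t, x))
        (∫ t in (0:ℝ)..1, Φ' (t, x₀)) x₀ := by
      intro x₀
      have hK : IsCompact ((Icc (0:ℝ) 1) ×ˢ closedBall x₀ 1) :=
        isCompact_Icc.prod (isCompact_closedBall x₀ 1)
      obtain ⟨C, hC⟩ := hK.exists_bound_of_continuousOn (hΦ'.continuous.continuousOn)
      apply intervalIntegral.hasFDerivAt_integral_of_dominated_of_fderiv_le
        (F := fun x t => Φ (t, x)) (F' := fun x t => Φ' (t, x)) (s := ball x₀ 1)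
        (bound := fun _ => C) (ball_mem_nhds x₀ one_pos)
      · filter_upwards with x using
          (hΦ.continuous.comp (continuous_id.prodMk continuous_const)).aestronglyMeasurable
      · exact (hΦ.continuous.comp (continuous_id.prodMk continuous_const)).intervalIntegrable 0 1
      · exact (hΦ'.continuous.comp (continuous_id.prodMk continuous_const)).aestronglyMeasurable
      · filter_upwards with t ht x hx
        exact hC (t, x) ⟨Ioc_subset_Icc_self (by simpa [uIoc_of_le (zero_le_one' ℝ)] using ht),
          ball_subset_closedBall hx⟩
      · exact intervalIntegrable_const
      · filter_upwards with t ht x hx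
        exact ((hΦ.differentiable (by norm_num)) (t, x)).hasFDerivAt.comp x
          (hasFDerivAt_prodMk_right t x)
    have hdiff : Differentiable ℝ (fun x : E => ∫ t in (0:ℝ)..1, Φ (t, x)) :=
      fun x₀ => (key x₀).differentiableAt
    have hfd : (fderiv ℝ fun x : E => ∫ t in (0:ℝ)..1, Φ (t, x)) =
        fun x₀ => ∫ t in (0:ℝ)..1, Φ' (t, x₀) := funext fun x₀ => (key x₀).fderiv
    rw [show ((n + 1 : ℕ) : WithTop ℕ∞) = (n : WithTop ℕ∞) + 1 by exact_mod_cast rfl,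
      contDiff_succ_iff_fderiv]
    refine ⟨hdiff, by simp, ?_⟩
    rw [hfd]
    exact ih Φ' hΦ'

private lemma contDiff_parametric_integral {F : Type u} [NormedAddCommGroup F] [NormedSpace ℝ F]
    [CompleteSpace F] {Φ : ℝ × E → F} (hΦ : ContDiff ℝ ∞ Φ) :
    ContDiff ℝ ∞ fun x : E => ∫ t in (0:ℝ)..1, Φ (t, x) := by
  rw [contDiff_infty]
  exact fun n => contDiff_nat_parametric_integral n Φ hΦ

private lemma ftc_line {F : E → ℝ} (hF : ContDiff ℝ ∞ F) (c u : E) :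
    F u - F c = (∫ t in (0:ℝ)..1, fderiv ℝ F (c + t • (u - c))) (u - c) := by
  set γ : ℝ → E := fun t => c + t • (u - c) with hγ
  have hγd : ∀ t : ℝ, HasDerivAt γ (u - c) t := fun t => by
    simpa [hγ] using ((hasDerivAt_id t).smul_const (u - c)).const_add c
  have hψ : ∀ t : ℝ, HasDerivAt (fun t => F (γ t)) (fderiv ℝ F (γ t) (u - c)) t := fun t =>
    ((hF.differentiable (by norm_num)) (γ t)).hasFDerivAt.comp_hasDerivAt t (hγd t)
  have hcont : Continuous fun t => fderiv ℝ F (γ t) :=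
    (hF.fderiv_right (m := ∞) (by norm_num)).continuous.comp (by fun_prop)
  have h1 : ∫ t in (0:ℝ)..1, fderiv ℝ F (γ t) (u - c) = F (γ 1) - F (γ 0) :=
    integral_eq_sub_of_hasDerivAt (fun t _ => hψ t)
      ((hcont.clm_apply continuous_const).intervalIntegrable 0 1)
  have h2 : (∫ t in (0:ℝ)..1, fderiv ℝ F (γ t)) (u - c)
      = ∫ t in (0:ℝ)..1, fderiv ℝ F (γ t) (u - c) := by
    rw [intervalIntegral.integral_of_le (zero_le_one' ℝ),
      intervalIntegral.integral_of_le (zero_le_one' ℝ)]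
    exact ContinuousLinearMap.integral_apply (hcont.integrableOn_Ioc.integrable) (u - c)
  rw [h2, h1]
  simp [hγ]

variable {H : Type*} [TopologicalSpace H] (I : ModelWithCorners ℝ E H) [I.Boundaryless]
  {M : Type*} [TopologicalSpace M] [ChartedSpace H M] [IsManifold I (⊤ : ℕ∞) M]
  [SigmaCompactSpace M] [T2Space M]

set_option linter.unusedSectionVars false in
private lemma hadamard_decomp (f : M → ℝ) (hf : ContMDiff I 𝓘(ℝ) (⊤ : ℕ∞) f) (x : M)
    (hdf : mfderiv I 𝓘(ℝ) f x = 0) :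
    ∃ (φ h : Fin (finrank ℝ E) → M → ℝ),
      (∀ i, ContMDiff I 𝓘(ℝ) (⊤ : ℕ∞) (φ i)) ∧ (∀ i, ContMDiff I 𝓘(ℝ) (⊤ : ℕ∞) (h i)) ∧
      (∀ i, φ i x = 0) ∧ (∀ i, h i x = 0) ∧
      f =ᶠ[𝓝 x] fun y => f x + ∑ i, φ i y * h i y := by
  set e := extChartAt I x with he
  set c : E := e x with hc
  have hopen : IsOpen e.target := isOpen_extChartAt_target x
  have hct : c ∈ e.target := mem_extChartAt_target x
  obtain ⟨r, hr, hball⟩ := (nhds_basis_closedBall.mem_iff).mp (hopen.mem_nhds hct)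
  set β : ContDiffBump c := ⟨r/2, r, by positivity, half_lt_self hr⟩ with hβ
  set F : E → ℝ := fun u => β u • f (e.symm u) with hF
  have hFsm : ContDiff ℝ ∞ F := by
    rw [← contMDiff_iff_contDiff]
    intro u
    by_cases hu : u ∈ e.target
    · exact (contMDiffAt_iff_contDiffAt.mpr β.contDiff.contDiffAt).smul
        (((hf.comp_contMDiffOn (contMDiffOn_extChartAt_symm x)) u hu).contMDiffAt
          (hopen.mem_nhds hu))
    · have hu' : u ∈ (closedBall c r)ᶜ := fun hmem => hu (hball hmem)
      refine contMDiffAt_const (c := (0:ℝ)) |>.congr_of_eventuallyEq ?_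
      filter_upwards [Metric.isClosed_closedBall.isOpen_compl.mem_nhds hu'] with v hv
      have : β v = 0 :=
        β.zero_of_le_dist (le_of_lt (lt_of_not_ge (fun h => hv (mem_closedBall.mpr h))))
      simp [hF, this]
  set G : E → E →L[ℝ] ℝ := fun u => ∫ t in (0:ℝ)..1, fderiv ℝ F (c + t • (u - c)) with hG
  have hGsm : ContDiff ℝ ∞ G := by
    apply contDiff_parametric_integral (Φ := fun p : ℝ × E => fderiv ℝ F (c + p.1 • (p.2 - c)))
    exact (hFsm.fderiv_right (m := ∞) (by norm_num)).comp
      (by fun_prop)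
  have hftc : ∀ u, F u - F c = G u (u - c) := fun u => ftc_line hFsm c u
  have hsymmx : e.symm c = x := extChartAt_to_inv x
  have hfds : fderiv ℝ F c = 0 := by
    have hev : F =ᶠ[𝓝 c] (f ∘ e.symm) := by
      filter_upwards [ball_mem_nhds c (by positivity : (0:ℝ) < r/2)] with v hv
      have h1 : β v = 1 := β.one_of_mem_closedBall (ball_subset_closedBall hv)
      simp [hF, h1]
    rw [hev.fderiv_eq, ← mfderiv_eq_fderiv]
    have hsymm : MDifferentiableAt 𝓘(ℝ, E) I e.symm c := by
      have := mdifferentiableWithinAt_extChartAt_symm (I := I) (x := x) hct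
      rwa [I.range_eq_univ, mdifferentiableWithinAt_univ] at this
    rw [mfderiv_comp c (by rw [hsymmx]; exact hf.mdifferentiableAt (by simp)) hsymm, hsymmx, hdf]
    rfl
  have hGc : G c = 0 := by
    have : G c = fderiv ℝ F c := by
      simp only [hG, sub_self, smul_zero, add_zero, intervalIntegral.integral_const]
      simp
    rw [this, hfds]
  obtain ⟨χ⟩ : Nonempty (SmoothBumpFunction I x) := inferInstance
  set b := finBasis ℝ E with hb
  set L : Fin (finrank ℝ E) → E →L[ℝ] ℝ := fun i =>
    (ContinuousLinearMap.proj i).comp (b.equivFunL.toContinuousLinearMap) with hL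
  refine ⟨fun i y => χ y • (L i (e y - c)), fun i y => χ y • (G (e y) (b i)), ?_, ?_, ?_, ?_, ?_⟩
  · intro i
    apply χ.contMDiff_smul
    exact (L i).contMDiff.comp_contMDiffOn
      ((contMDiffOn_extChartAt (n := (⊤ : ℕ∞))).sub contMDiffOn_const)
  · intro i
    apply χ.contMDiff_smul
    exact (contMDiff_iff_contDiff.mpr (hGsm.clm_apply contDiff_const)).comp_contMDiffOn
      (contMDiffOn_extChartAt (n := (⊤ : ℕ∞)))
  · intro i; simp [← hc]
  · intro i; simp [← hc, hGc]
  · have h1 : e.source ∈ 𝓝 x := extChartAt_source_mem_nhds x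
    have h2 : ∀ᶠ y in 𝓝 x, e y ∈ ball c (r/2) :=
      (continuousAt_extChartAt x) (ball_mem_nhds c (by positivity))
    filter_upwards [h1, h2, χ.eventuallyEq_one] with y hy1 hy2 hy3
    have hsum : ∑ i, (χ y • L i (e y - c)) * (χ y • G (e y) (b i))
        = G (e y) (e y - c) := by
      rw [show χ y = (1:ℝ) by simpa using hy3]
      simp only [one_smul]
      have : ∑ i, L i (e y - c) * G (e y) (b i) = G (e y) (∑ i, L i (e y - c) • b i) := by
        rw [map_sum]
        congr 1
        ext i
        rw [ContinuousLinearMap.map_smul, smul_eq_mul, mul_comm]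
      rw [this]
      congr 1
      simpa [hL] using b.sum_equivFun (e y - c)
    rw [hsum]
    have hFy : F (e y) = f y := by
      have h1' : β (e y) = 1 := β.one_of_mem_closedBall (ball_subset_closedBall hy2)
      simp [hF, h1', e.left_inv hy1]
    have hFc : F c = f x := by
      have h1' : β c = 1 := β.one_of_mem_closedBall (mem_closedBall_self (by positivity))
      simp [hF, h1', hsymmx]
    have := hftc (e y)
    rw [hFy, hFc] at this
    linarith

set_option linter.unusedSectionVars false in
private lemma exists_extension_covector (x : M) (α : TangentSpace I x →L[ℝ] ℝ) :
    ∃ f : M → ℝ, ContMDiff I 𝓘(ℝ) (⊤ : ℕ∞) f ∧ mfderiv I 𝓘(ℝ) f x = α := by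
  obtain ⟨χ⟩ : Nonempty (SmoothBumpFunction I x) := inferInstance
  set e := extChartAt I x with he
  set c : E := e x with hc
  set B : E →L[ℝ] TangentSpace I x :=
    mfderivWithin 𝓘(ℝ, E) I e.symm (Set.range I) c with hB
  refine ⟨fun y => χ y • ((α.comp B) (e y - c)), ?_, ?_⟩
  · apply χ.contMDiff_smul
    exact (α.comp B).contMDiff.comp_contMDiffOn
      ((contMDiffOn_extChartAt (n := (⊤ : ℕ∞))).sub contMDiffOn_const)
  · have hev : (fun y => χ y • ((α.comp B) (e y - c)))
        =ᶠ[𝓝 x] fun y => (α.comp B) (e y - c) := by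
      filter_upwards [χ.eventuallyEq_one] with y hy
      rw [show χ y = (1:ℝ) by simpa using hy, one_smul]
    rw [hev.mfderiv_eq]
    have hA : HasMFDerivAt I 𝓘(ℝ, E) e x (mfderiv I I (chartAt H x) x) :=
      hasMFDerivAt_extChartAt (mem_chart_source H x)
    have hA' : HasMFDerivAt I 𝓘(ℝ, E) (fun y => e y - c) x (mfderiv I I (chartAt H x) x) := by
      have := hA.sub (hasMFDerivAt_const (I' := 𝓘(ℝ, E)) c x)
      exact this.congr_mfderiv (sub_zero _)
    have hcomp : HasMFDerivAt I 𝓘(ℝ) (fun y => (α.comp B) (e y - c)) x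
        ((α.comp B).comp (mfderiv I I (chartAt H x) x)) :=
      ((α.comp B).hasMFDerivAt).comp x hA'
    rw [hcomp.mfderiv]
    have hAe : mfderiv I 𝓘(ℝ, E) e x = mfderiv I I (chartAt H x) x := hA.mfderiv
    have hBA : B.comp (mfderiv I I (chartAt H x) x) = ContinuousLinearMap.id ℝ _ := by
      have := mfderivWithin_extChartAt_symm_comp_mfderiv_extChartAt (I := I) (x := x)
        (mem_extChartAt_target x)
      rwa [extChartAt_to_inv, hAe] at this
    ext v
    exact congrArg α (DFunLike.congr_fun hBA v)

end Aux

/-- The dual of a Poisson bracket on a finite-dimensional, σ-compact, Hausdorff smooth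
manifold without boundary factors through a family of antisymmetric bilinear forms on the
cotangent spaces: there is `P` with `{f,g}(x) = P x (df_x, dg_x)`. -/
theorem poisson_bracket_factors_through_bivector
    {E : Type*} [NormedAddCommGroup E] [NormedSpace ℝ E] [FiniteDimensional ℝ E]
    {H : Type*} [TopologicalSpace H] (I : ModelWithCorners ℝ E H) [I.Boundaryless]
    {M : Type*} [TopologicalSpace M] [ChartedSpace H M] [IsManifold I (⊤ : ℕ∞) M]
    [SigmaCompactSpace M] [T2Space M]
    (bracket : (M → ℝ) → (M → ℝ) → (M → ℝ))
    (hsmooth : ∀ f g, ContMDiff I 𝓘(ℝ) (⊤ : ℕ∞) f → ContMDiff I 𝓘(ℝ) (⊤ : ℕ∞) g →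
      ContMDiff I 𝓘(ℝ) (⊤ : ℕ∞) (bracket f g))
    (hadd : ∀ f₁ f₂ g, ContMDiff I 𝓘(ℝ) (⊤ : ℕ∞) f₁ → ContMDiff I 𝓘(ℝ) (⊤ : ℕ∞) f₂ →
      ContMDiff I 𝓘(ℝ) (⊤ : ℕ∞) g → bracket (f₁ + f₂) g = bracket f₁ g + bracket f₂ g)
    (hsmul : ∀ (c : ℝ) f g, ContMDiff I 𝓘(ℝ) (⊤ : ℕ∞) f → ContMDiff I 𝓘(ℝ) (⊤ : ℕ∞) g →
      bracket (c • f) g = c • bracket f g)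
    (hskew : ∀ f g, ContMDiff I 𝓘(ℝ) (⊤ : ℕ∞) f → ContMDiff I 𝓘(ℝ) (⊤ : ℕ∞) g →
      bracket f g = - bracket g f)
    (hleibniz : ∀ f g h, ContMDiff I 𝓘(ℝ) (⊤ : ℕ∞) f → ContMDiff I 𝓘(ℝ) (⊤ : ℕ∞) g →
      ContMDiff I 𝓘(ℝ) (⊤ : ℕ∞) h → bracket f (g * h) = bracket f g * h + g * bracket f h)
    (hjacobi : ∀ f g h, ContMDiff I 𝓘(ℝ) (⊤ : ℕ∞) f → ContMDiff I 𝓘(ℝ) (⊤ : ℕ∞) g →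
      ContMDiff I 𝓘(ℝ) (⊤ : ℕ∞) h →
      bracket f (bracket g h) = bracket (bracket f g) h + bracket g (bracket f h)) :
    ∃ P : ∀ x : M, (TangentSpace I x →L[ℝ] ℝ) → (TangentSpace I x →L[ℝ] ℝ) → ℝ,
      (∀ (x : M) (α α' β : TangentSpace I x →L[ℝ] ℝ),
        P x (α + α') β = P x α β + P x α' β) ∧
      (∀ (x : M) (c : ℝ) (α β : TangentSpace I x →L[ℝ] ℝ),
        P x (c • α) β = c * P x α β) ∧
      (∀ (x : M) (α β β' : TangentSpace I x →L[ℝ] ℝ),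
        P x α (β + β') = P x α β + P x α β') ∧
      (∀ (x : M) (c : ℝ) (α β : TangentSpace I x →L[ℝ] ℝ),
        P x α (c • β) = c * P x α β) ∧
      (∀ (x : M) (α β : TangentSpace I x →L[ℝ] ℝ), P x α β = - P x β α) ∧
      (∀ f g, ContMDiff I 𝓘(ℝ) (⊤ : ℕ∞) f → ContMDiff I 𝓘(ℝ) (⊤ : ℕ∞) g →
        ∀ x : M, bracket f g x = P x (mfderiv I 𝓘(ℝ) f x) (mfderiv I 𝓘(ℝ) g x)) := by
  classical
  have smooth1 : ContMDiff I 𝓘(ℝ) (⊤ : ℕ∞) (1 : M → ℝ) := contMDiff_const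
  -- second-slot linearity
  have hadd2 : ∀ f g₁ g₂, ContMDiff I 𝓘(ℝ) (⊤ : ℕ∞) f → ContMDiff I 𝓘(ℝ) (⊤ : ℕ∞) g₁ →
      ContMDiff I 𝓘(ℝ) (⊤ : ℕ∞) g₂ → bracket f (g₁ + g₂) = bracket f g₁ + bracket f g₂ := by
    intro f g₁ g₂ hf hg₁ hg₂
    rw [hskew f (g₁ + g₂) hf (hg₁.add hg₂), hadd g₁ g₂ f hg₁ hg₂ hf,
      hskew g₁ f hg₁ hf, hskew g₂ f hg₂ hf]
    funext y; simp; ring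
  have hsmul2 : ∀ (c : ℝ) f g, ContMDiff I 𝓘(ℝ) (⊤ : ℕ∞) f → ContMDiff I 𝓘(ℝ) (⊤ : ℕ∞) g →
      bracket f (c • g) = c • bracket f g := by
    intro c f g hf hg
    rw [hskew f (c • g) hf (show ContMDiff I 𝓘(ℝ) (⊤ : ℕ∞) (c • g) from (contMDiff_const : ContMDiff I 𝓘(ℝ) (⊤ : ℕ∞) (fun _ : M => c)).smul hg), hsmul c g f hg hf,
      hskew g f hg hf]
    funext y; simp
  have hone : ∀ f, ContMDiff I 𝓘(ℝ) (⊤ : ℕ∞) f → bracket f (1 : M → ℝ) = 0 := by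
    intro f hf
    have h := hleibniz f 1 1 hf smooth1 smooth1
    rw [one_mul] at h
    funext y
    have := congrFun h y
    simp only [Pi.add_apply, Pi.mul_apply, Pi.one_apply, one_mul, mul_one] at this
    have h0 : bracket f 1 y = bracket f 1 y + bracket f 1 y := this
    simpa using (by linarith : bracket f 1 y = 0)
  have hconst : ∀ f, ContMDiff I 𝓘(ℝ) (⊤ : ℕ∞) f → ∀ a : ℝ, bracket f (fun _ => a) = 0 := by
    intro f hf a
    have h1 : (fun _ : M => a) = a • (1 : M → ℝ) := by
      funext y; simp
    rw [h1, hsmul2 a f 1 hf smooth1, hone f hf]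
    funext y; simp
  have hzero2 : ∀ f, ContMDiff I 𝓘(ℝ) (⊤ : ℕ∞) f → bracket f (0 : M → ℝ) = 0 := by
    intro f hf
    have : (0 : M → ℝ) = fun _ : M => (0 : ℝ) := rfl
    rw [this, hconst f hf 0]; rfl
  -- key lemma: second-slot vanishing when the differential vanishes
  have hkey2 : ∀ g, ContMDiff I 𝓘(ℝ) (⊤ : ℕ∞) g → ∀ f, ContMDiff I 𝓘(ℝ) (⊤ : ℕ∞) f → ∀ x : M,
      mfderiv I 𝓘(ℝ) f x = 0 → bracket g f x = 0 := by
    intro g hg f hf x hdf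
    obtain ⟨φ, h, hφsm, hhsm, hφx, hhx, hev⟩ := hadamard_decomp I f hf x hdf
    set S : M → ℝ := fun y => ∑ i, φ i y * h i y with hS
    have hprod : ∀ i, ContMDiff I 𝓘(ℝ) (⊤ : ℕ∞) (φ i * h i) := fun i => (hφsm i).mul (hhsm i)
    have hSsm : ContMDiff I 𝓘(ℝ) (⊤ : ℕ∞) S :=
      contMDiff_finset_sum fun i _ => hprod i
    -- bracket with a finite sum of products vanishes at x
    have hsum0 : ∀ s : Finset (Fin (finrank ℝ E)),
        bracket g (fun y => ∑ i ∈ s, φ i y * h i y) x = 0 := by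
      intro s
      induction s using Finset.induction with
      | empty =>
        have : (fun y : M => ∑ i ∈ (∅ : Finset (Fin (finrank ℝ E))), φ i y * h i y)
            = (0 : M → ℝ) := by funext y; simp
        rw [this, hzero2 g hg]; rfl
      | @insert a s ha ih =>
        have hsplit : (fun y : M => ∑ i ∈ insert a s, φ i y * h i y)
            = (φ a * h a) + fun y => ∑ i ∈ s, φ i y * h i y := by
          funext y; simp [Finset.sum_insert ha]
        have hssm : ContMDiff I 𝓘(ℝ) (⊤ : ℕ∞) (fun y => ∑ i ∈ s, φ i y * h i y) :=
          contMDiff_finset_sum fun i _ => hprod i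
        rw [hsplit, hadd2 g (φ a * h a) _ hg (hprod a) hssm]
        have hlb := congrFun (hleibniz g (φ a) (h a) hg (hφsm a) (hhsm a)) x
        simp only [Pi.add_apply, Pi.mul_apply] at hlb ⊢
        rw [ih]
        rw [hlb, hφx a, hhx a]
        ring
    -- the remainder vanishes near x
    set ρ : M → ℝ := fun y => f y - (f x + S y) with hρ
    have hρsm : ContMDiff I 𝓘(ℝ) (⊤ : ℕ∞) ρ := hf.sub (contMDiff_const.add hSsm)
    have hρ0 : ∀ᶠ y in 𝓝 x, ρ y = 0 := by
      filter_upwards [hev] with y hy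
      simp [hρ, hy, hS]
    have hρx : ρ x = 0 := hρ0.self_of_nhds
    have hρbr : bracket g ρ x = 0 := by
      obtain ⟨χ, -, hχsub⟩ := ((SmoothBumpFunction.nhds_basis_tsupport (I := I) x).mem_iff).mp
        (hρ0 : {y | ρ y = 0} ∈ 𝓝 x)
      set ψ : M → ℝ := fun y => 1 - χ y with hψ
      have hψsm : ContMDiff I 𝓘(ℝ) (⊤ : ℕ∞) ψ := contMDiff_const.sub χ.contMDiff
      have hψx : ψ x = 0 := by simp [hψ]
      have hρψ : ρ = ρ * ψ := by
        funext y
        by_cases hy : ρ y = 0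
        · simp [hy]
        · have hy' : y ∉ tsupport (χ : M → ℝ) := fun hmem => hy (hχsub hmem)
          have : χ y = 0 := image_eq_zero_of_notMem_tsupport hy'
          simp [hψ, this]
      have := congrFun (hleibniz g ρ ψ hg hρsm hψsm) x
      simp only [Pi.add_apply, Pi.mul_apply] at this
      rw [hψx, hρx] at this
      calc bracket g ρ x = bracket g (ρ * ψ) x := by rw [← hρψ]
        _ = 0 := by rw [this]; ring
    -- assemble
    have hfd : f = ((fun _ : M => f x) + S) + ρ := by
      funext y; simp [hρ]
    have hcs : ContMDiff I 𝓘(ℝ) (⊤ : ℕ∞) ((fun _ : M => f x) + S) := contMDiff_const.add hSsm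
    calc bracket g f x = bracket g (((fun _ : M => f x) + S) + ρ) x := by rw [← hfd]
      _ = bracket g ((fun _ : M => f x) + S) x + bracket g ρ x := by
          rw [hadd2 g _ ρ hg hcs hρsm]; rfl
      _ = (bracket g (fun _ : M => f x) x + bracket g S x) + bracket g ρ x := by
          rw [hadd2 g _ S hg contMDiff_const hSsm]; rfl
      _ = 0 := by
          rw [hconst g hg (f x), hρbr, hsum0 Finset.univ]
          simp [hS]
  -- first-slot version
  have hkey1 : ∀ f, ContMDiff I 𝓘(ℝ) (⊤ : ℕ∞) f → ∀ x : M, mfderiv I 𝓘(ℝ) f x = 0 →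
      ∀ g, ContMDiff I 𝓘(ℝ) (⊤ : ℕ∞) g → bracket f g x = 0 := by
    intro f hf x hdf g hg
    have := congrFun (hskew f g hf hg) x
    rw [this, Pi.neg_apply, hkey2 g hg f hf x hdf, neg_zero]
  -- dependence only on the differential, first slot
  have hdep1 : ∀ f₁ f₂ g (x : M), ContMDiff I 𝓘(ℝ) (⊤ : ℕ∞) f₁ → ContMDiff I 𝓘(ℝ) (⊤ : ℕ∞) f₂ →
      ContMDiff I 𝓘(ℝ) (⊤ : ℕ∞) g → mfderiv I 𝓘(ℝ) f₁ x = mfderiv I 𝓘(ℝ) f₂ x →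
      bracket f₁ g x = bracket f₂ g x := by
    intro f₁ f₂ g x hf₁ hf₂ hg hd
    have hsub : ContMDiff I 𝓘(ℝ) (⊤ : ℕ∞) (f₁ - f₂) := hf₁.sub hf₂
    have hm₁ : MDifferentiableAt I 𝓘(ℝ) f₁ x := hf₁.mdifferentiableAt (by simp)
    have hm₂ : MDifferentiableAt I 𝓘(ℝ) f₂ x := hf₂.mdifferentiableAt (by simp)
    have hdsub : mfderiv I 𝓘(ℝ) (f₁ - f₂) x = 0 := by
      rw [mfderiv_sub hm₁ hm₂, hd]
      exact sub_self _
    have hcomb : f₁ = (f₁ - f₂) + f₂ := by funext y; simp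
    calc bracket f₁ g x = bracket ((f₁ - f₂) + f₂) g x := by rw [← hcomb]
      _ = bracket (f₁ - f₂) g x + bracket f₂ g x := by
          rw [hadd (f₁ - f₂) f₂ g hsub hf₂ hg]; rfl
      _ = bracket f₂ g x := by rw [hkey1 (f₁ - f₂) hsub x hdsub g hg, zero_add]
  have hdep2 : ∀ g f₁ f₂ (x : M), ContMDiff I 𝓘(ℝ) (⊤ : ℕ∞) g → ContMDiff I 𝓘(ℝ) (⊤ : ℕ∞) f₁ →
      ContMDiff I 𝓘(ℝ) (⊤ : ℕ∞) f₂ → mfderiv I 𝓘(ℝ) f₁ x = mfderiv I 𝓘(ℝ) f₂ x →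
      bracket g f₁ x = bracket g f₂ x := by
    intro g f₁ f₂ x hg hf₁ hf₂ hd
    rw [congrFun (hskew g f₁ hg hf₁) x, congrFun (hskew g f₂ hg hf₂) x,
      Pi.neg_apply, Pi.neg_apply, hdep1 f₁ f₂ g x hf₁ hf₂ hg hd]
  -- choose representatives
  choose ext hext_sm hext_d using fun (x : M) (α : TangentSpace I x →L[ℝ] ℝ) =>
    exists_extension_covector I x α
  refine ⟨fun x α β => bracket (ext x α) (ext x β) x, ?_, ?_, ?_, ?_, ?_, ?_⟩
  · -- left additivity
    dsimp only
    intro x α α' β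
    have h1 : bracket (ext x (α + α')) (ext x β) x
        = bracket (ext x α + ext x α') (ext x β) x := by
      apply hdep1 _ _ _ x (hext_sm x (α + α')) ((hext_sm x α).add (hext_sm x α'))
        (hext_sm x β)
      have hm₁ : MDifferentiableAt I 𝓘(ℝ) (ext x α) x := (hext_sm x α).mdifferentiableAt (by simp)
      have hm₂ : MDifferentiableAt I 𝓘(ℝ) (ext x α') x := (hext_sm x α').mdifferentiableAt (by simp)
      rw [hext_d x (α + α'), mfderiv_add hm₁ hm₂, hext_d x α, hext_d x α']
      rfl
    rw [h1, congrFun (hadd (ext x α) (ext x α') (ext x β) (hext_sm x α) (hext_sm x α')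
      (hext_sm x β)) x, Pi.add_apply]
  · -- left scalar
    dsimp only
    intro x c α β
    have h1 : bracket (ext x (c • α)) (ext x β) x = bracket (c • ext x α) (ext x β) x := by
      apply hdep1 _ _ _ x (hext_sm x (c • α))
        (show ContMDiff I 𝓘(ℝ) (⊤ : ℕ∞) (c • ext x α) from (contMDiff_const : ContMDiff I 𝓘(ℝ) (⊤ : ℕ∞) (fun _ : M => c)).smul (hext_sm x α))
        (hext_sm x β)
      have hm₁ : MDifferentiableAt I 𝓘(ℝ) (ext x α) x := (hext_sm x α).mdifferentiableAt (by simp)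
      rw [hext_d x (c • α), const_smul_mfderiv hm₁ c, hext_d x α]
      rfl
    rw [h1, congrFun (hsmul c (ext x α) (ext x β) (hext_sm x α) (hext_sm x β)) x,
      Pi.smul_apply, smul_eq_mul]
  · -- right additivity
    dsimp only
    intro x α β β'
    have h1 : bracket (ext x α) (ext x (β + β')) x
        = bracket (ext x α) (ext x β + ext x β') x := by
      apply hdep2 _ _ _ x (hext_sm x α) (hext_sm x (β + β'))
        ((hext_sm x β).add (hext_sm x β'))
      have hm₁ : MDifferentiableAt I 𝓘(ℝ) (ext x β) x := (hext_sm x β).mdifferentiableAt (by simp)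
      have hm₂ : MDifferentiableAt I 𝓘(ℝ) (ext x β') x := (hext_sm x β').mdifferentiableAt (by simp)
      rw [hext_d x (β + β'), mfderiv_add hm₁ hm₂, hext_d x β, hext_d x β']
      rfl
    rw [h1, congrFun (hadd2 (ext x α) (ext x β) (ext x β') (hext_sm x α) (hext_sm x β)
      (hext_sm x β')) x, Pi.add_apply]
  · -- right scalar
    dsimp only
    intro x c α β
    have h1 : bracket (ext x α) (ext x (c • β)) x = bracket (ext x α) (c • ext x β) x := by
      apply hdep2 _ _ _ x (hext_sm x α) (hext_sm x (c • β))
        (show ContMDiff I 𝓘(ℝ) (⊤ : ℕ∞) (c • ext x β) from (contMDiff_const : ContMDiff I 𝓘(ℝ) (⊤ : ℕ∞) (fun _ : M => c)).smul (hext_sm x β))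
      have hm₁ : MDifferentiableAt I 𝓘(ℝ) (ext x β) x := (hext_sm x β).mdifferentiableAt (by simp)
      rw [hext_d x (c • β), const_smul_mfderiv hm₁ c, hext_d x β]
      rfl
    rw [h1, congrFun (hsmul2 c (ext x α) (ext x β) (hext_sm x α) (hext_sm x β)) x,
      Pi.smul_apply, smul_eq_mul]
  · -- antisymmetry
    dsimp only
    intro x α β
    rw [congrFun (hskew (ext x α) (ext x β) (hext_sm x α) (hext_sm x β)) x, Pi.neg_apply]
  · -- compatibility
    dsimp only
    intro f g hf hg x
    have h1 : bracket f g x = bracket (ext x (mfderiv I 𝓘(ℝ) f x)) g x :=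
      hdep1 f _ g x hf (hext_sm x _) hg (hext_d x _).symm
    have h2 : bracket (ext x (mfderiv I 𝓘(ℝ) f x)) g x
        = bracket (ext x (mfderiv I 𝓘(ℝ) f x)) (ext x (mfderiv I 𝓘(ℝ) g x)) x :=
      hdep2 _ g _ x (hext_sm x _) hg (hext_sm x _) (hext_d x _).symm
    rw [h1, h2]
end

section
/- (Step 2 of the main proof, finite-dimensional case: point derivations annihilate functions vanishing to second order.) Let U ⊆ ℝⁿ be a convex open set with 0 ∈ U, and let D : C^∞(U,ℝ) → ℝ be an ℝ-linear map which is a point derivation at 0, i.e. D(fg) = f(0)·D(g) + g(0)·D(f) for all f, g ∈ C^∞(U,ℝ). If f ∈ C^∞(U,ℝ) satisfies f(0) = 0 and the derivative of f at 0 vanishes, then D(f) = 0. -/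
set_option synthInstance.maxHeartbeats 1000000
set_option maxHeartbeats 1000000

open scoped ContDiff
open intervalIntegral MeasureTheory Set
open scoped Manifold

lemma lemA {n : ℕ} : ∀ (k : ℕ) {Y : Type} [NormedAddCommGroup Y] [NormedSpace ℝ Y]
    [CompleteSpace Y] (F : ℝ × (Fin n → ℝ) → Y), ContDiff ℝ ∞ F →
    ContDiff ℝ k (fun x => ∫ t in (0:ℝ)..1, F (t, x)) := by
  intro k
  induction k with
  | zero =>
    intro Y _ _ _ F hF
    have h := continuous_parametric_intervalIntegral_of_continuous'
      (f := fun x t => F (t, x)) (μ := volume)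
      (hF.continuous.comp continuous_swap) 0 1
    exact (contDiff_zero.2 h).of_le (by norm_num)
  | succ k ih =>
    intro Y _ _ _ F hF
    set G : ℝ × (Fin n → ℝ) → ((Fin n → ℝ) →L[ℝ] Y) :=
      fun p => (fderiv ℝ F p).comp (ContinuousLinearMap.inr ℝ ℝ (Fin n → ℝ)) with hGdef
    have hG : ContDiff ℝ ∞ G := by
      exact (hF.fderiv_right (le_of_eq (by norm_num))).clm_comp contDiff_const
    have key : ∀ x₀ : Fin n → ℝ, HasFDerivAt (fun x => ∫ t in (0:ℝ)..1, F (t, x))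
        (∫ t in (0:ℝ)..1, G (t, x₀)) x₀ := by
      intro x₀
      obtain ⟨C, hC⟩ : ∃ C, ∀ p ∈ (Set.Icc (0:ℝ) 1 ×ˢ Metric.closedBall x₀ 1), ‖G p‖ ≤ C :=
        (isCompact_Icc.prod (isCompact_closedBall x₀ 1)).exists_bound_of_continuousOn
          hG.continuous.continuousOn
      have hball : Metric.ball x₀ 1 ⊆ Metric.closedBall x₀ 1 := Metric.ball_subset_closedBall
      have hIsub : Set.uIoc (0:ℝ) 1 ⊆ Set.Icc (0:ℝ) 1 := by
        rw [Set.uIoc_of_le zero_le_one]; exact Set.Ioc_subset_Icc_self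
      have hlip : ∀ t ∈ Set.uIoc (0:ℝ) 1,
          LipschitzOnWith (Real.nnabs C) (fun x => F (t, x)) (Metric.ball x₀ 1) := by
        intro t ht
        apply Convex.lipschitzOnWith_of_nnnorm_hasFDerivWithin_le (f' := fun x => G (t, x))
          (fun x hx => ?_) (fun x hx => ?_) (convex_ball x₀ 1)
        · have h1 : HasFDerivAt F (fderiv ℝ F (t, x)) (t, x) :=
            (hF.differentiable (by simp) (t, x)).hasFDerivAt
          have h2 : HasFDerivAt (fun y : Fin n → ℝ => ((t : ℝ), y))
              (ContinuousLinearMap.inr ℝ ℝ (Fin n → ℝ)) x :=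
            (hasFDerivAt_const t x).prodMk (hasFDerivAt_id x)
          exact (h1.comp x h2).hasFDerivWithinAt
        · have := hC (t, x) ⟨hIsub ht, hball hx⟩
          rw [← NNReal.coe_le_coe]
          exact this.trans (le_abs_self C)
      have hF'cont : Continuous fun t => G (t, x₀) :=
        hG.continuous.comp (continuous_id.prodMk continuous_const)
      have h := intervalIntegral.hasFDerivAt_integral_of_dominated_loc_of_lip
        (F := fun x t => F (t, x)) (F' := fun t => G (t, x₀)) (x₀ := x₀)
        (a := 0) (b := 1) (μ := volume) (bound := fun _ => C) (Metric.ball_mem_nhds x₀ one_pos)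
        (Filter.Eventually.of_forall fun x =>
          Continuous.aestronglyMeasurable (hF.continuous.comp (continuous_id.prodMk continuous_const) : Continuous fun t => F (t, x)))
        ((hF.continuous.comp (continuous_id.prodMk continuous_const)).intervalIntegrable 0 1)
        hF'cont.aestronglyMeasurable
        (Filter.Eventually.of_forall hlip)
        intervalIntegrable_const
        (Filter.Eventually.of_forall fun t ht => by
          have h1 : HasFDerivAt F (fderiv ℝ F (t, x₀)) (t, x₀) :=
            (hF.differentiable (by simp) (t, x₀)).hasFDerivAt
          have h2 : HasFDerivAt (fun y : Fin n → ℝ => ((t : ℝ), y))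
              (ContinuousLinearMap.inr ℝ ℝ (Fin n → ℝ)) x₀ :=
            (hasFDerivAt_const t x₀).prodMk (hasFDerivAt_id x₀)
          exact h1.comp x₀ h2)
      exact h.2
    have hdiff : Differentiable ℝ (fun x => ∫ t in (0:ℝ)..1, F (t, x)) :=
      fun x => (key x).differentiableAt
    have hfderiv : (fderiv ℝ (fun x => ∫ t in (0:ℝ)..1, F (t, x)))
        = fun x => ∫ t in (0:ℝ)..1, G (t, x) := funext fun x => (key x).fderiv
    rw [show ((k+1 : ℕ) : WithTop ℕ∞) = (k : WithTop ℕ∞) + 1 by push_cast; ring]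
    rw [contDiff_succ_iff_fderiv]
    refine ⟨hdiff, by simp, ?_⟩
    rw [hfderiv]
    exact ih G hG

lemma lemA' {n : ℕ} {Y : Type} [NormedAddCommGroup Y] [NormedSpace ℝ Y]
    [CompleteSpace Y] (F : ℝ × (Fin n → ℝ) → Y) (hF : ContDiff ℝ ∞ F) :
    ContDiff ℝ ∞ (fun x => ∫ t in (0:ℝ)..1, F (t, x)) :=
  contDiff_infty.2 fun k => lemA k F hF

lemma lemB {n : ℕ} {V : Set (ℝ × (Fin n → ℝ))} (hV : IsOpen V)
    {G : ℝ × (Fin n → ℝ) → ℝ} (hG : ContDiffOn ℝ ∞ G V)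
    {U : Set (Fin n → ℝ)} (hUopen : IsOpen U)
    (hsub : ∀ x ∈ U, ∀ t ∈ Icc (0:ℝ) 1, (t, x) ∈ V) :
    ContDiffOn ℝ ∞ (fun x => ∫ t in (0:ℝ)..1, G (t, x)) U := by
  apply contDiffOn_of_locally_contDiffOn
  intro x₀ hx₀
  -- tube lemma
  have hKV : (Icc (0:ℝ) 1) ×ˢ ({x₀} : Set (Fin n → ℝ)) ⊆ V := by
    rintro ⟨t, x⟩ ⟨ht, hx⟩
    simp only [mem_singleton_iff] at hx
    subst hx
    exact hsub _ hx₀ t ht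
  obtain ⟨u1, v1, hu1, hv1, hIu1, hxv1, huv⟩ :=
    generalized_tube_lemma isCompact_Icc isCompact_singleton hV hKV
  have hx₀v1 : x₀ ∈ v1 := hxv1 rfl
  obtain ⟨r, hr, hrball⟩ := Metric.nhds_basis_closedBall.mem_iff.1
    ((hv1.inter hUopen).mem_nhds ⟨hx₀v1, hx₀⟩)
  set K : Set (ℝ × (Fin n → ℝ)) := Icc (0:ℝ) 1 ×ˢ Metric.closedBall x₀ r with hK
  have hKcomp : IsCompact K := isCompact_Icc.prod (isCompact_closedBall _ _)
  have hVo : IsOpen (u1 ×ˢ v1) := hu1.prod hv1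
  have hKVo : K ⊆ u1 ×ˢ v1 := prod_mono hIu1 (hrball.trans inter_subset_left)
  obtain ⟨L, hLcomp, hKL, hLVo⟩ := exists_compact_between hKcomp hVo hKVo
  obtain ⟨χ, hχ1, hχ0, _⟩ := exists_contMDiffMap_one_nhds_of_subset_interior
    (𝓘(ℝ, ℝ × (Fin n → ℝ))) (n := (⊤ : ℕ∞)) (s := K) (t := L) hKcomp.isClosed hKL
  have hχsm : ContDiff ℝ ∞ (χ : ℝ × (Fin n → ℝ) → ℝ) := contMDiff_iff_contDiff.1 χ.contMDiff
  classical
  set Ft : ℝ × (Fin n → ℝ) → ℝ := fun p => if p ∈ u1 ×ˢ v1 then χ p * G p else 0 with hFt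
  have hFtsm : ContDiff ℝ ∞ Ft := by
    rw [contDiff_iff_contDiffAt]
    intro p
    by_cases hp : p ∈ u1 ×ˢ v1
    · have : ContDiffAt ℝ ∞ (fun q => χ q * G q) p :=
        hχsm.contDiffAt.mul ((hG.contDiffAt (hV.mem_nhds (huv hp))))
      apply this.congr_of_eventuallyEq
      filter_upwards [hVo.mem_nhds hp] with q hq
      simp only [Ft, if_pos hq]
    · have hpL : p ∉ L := fun h => hp (hLVo h)
      have : ContDiffAt ℝ ∞ (fun _ : ℝ × (Fin n → ℝ) => (0:ℝ)) p := contDiffAt_const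
      apply this.congr_of_eventuallyEq
      filter_upwards [hLcomp.isClosed.isOpen_compl.mem_nhds hpL] with q hq
      by_cases h : q ∈ u1 ×ˢ v1
      · simp only [Ft, if_pos h, hχ0 q hq, zero_mul]
      · simp only [Ft, if_neg h]
  refine ⟨Metric.ball x₀ r, Metric.isOpen_ball, Metric.mem_ball_self hr, ?_⟩
  have hInt : ContDiff ℝ ∞ (fun x => ∫ t in (0:ℝ)..1, Ft (t, x)) := lemA' Ft hFtsm
  apply (hInt.contDiffOn (s := U ∩ Metric.ball x₀ r)).congr
  intro x hx
  apply intervalIntegral.integral_congr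
  intro t ht
  rw [uIcc_of_le zero_le_one] at ht
  have hmemK : (t, x) ∈ K := ⟨ht, Metric.ball_subset_closedBall hx.2⟩
  have h1 : χ (t, x) = 1 := hχ1.self_of_nhdsSet _ hmemK
  have hmem : (t, x) ∈ u1 ×ˢ v1 := hKVo hmemK
  simp only [Ft, if_pos hmem, h1, one_mul]

/-- A point derivation at `0` on `C^∞(U,ℝ)`, `U ⊆ ℝⁿ` convex open with `0 ∈ U`,
annihilates every smooth function vanishing to second order at `0`. -/
theorem point_derivation_vanishes_on_second_order
    {n : ℕ} {U : Set (Fin n → ℝ)} (hU : IsOpen U) (hUconv : Convex ℝ U)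
    (hU0 : (0 : Fin n → ℝ) ∈ U)
    (D : ((Fin n → ℝ) → ℝ) → ℝ)
    (hadd : ∀ f g, ContDiffOn ℝ ∞ f U → ContDiffOn ℝ ∞ g U → D (f + g) = D f + D g)
    (hsmul : ∀ (c : ℝ) f, ContDiffOn ℝ ∞ f U → D (c • f) = c * D f)
    (hder : ∀ f g, ContDiffOn ℝ ∞ f U → ContDiffOn ℝ ∞ g U →
      D (f * g) = f 0 * D g + g 0 * D f)
    (f : (Fin n → ℝ) → ℝ) (hf : ContDiffOn ℝ ∞ f U)
    (hf0 : f 0 = 0) (hdf0 : fderiv ℝ f 0 = 0) :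
    D f = 0 := by
  classical
  have hinf : (∞ : WithTop ℕ∞) + 1 ≤ ∞ := by
    norm_num
  have hfd : ContDiffOn ℝ ∞ (fderiv ℝ f) U := hf.fderiv_of_isOpen hU hinf
  set V : Set (ℝ × (Fin n → ℝ)) := (fun p : ℝ × (Fin n → ℝ) => p.1 • p.2) ⁻¹' U with hVdef
  have hVopen : IsOpen V := hU.preimage (continuous_fst.smul continuous_snd)
  have hsubV : ∀ x ∈ U, ∀ t ∈ Icc (0:ℝ) 1, (t, x) ∈ V := by
    intro x hx t ht
    have h := hUconv hU0 hx (sub_nonneg.2 ht.2) ht.1 (by ring)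
    simpa [V] using h
  set G : Fin n → ℝ × (Fin n → ℝ) → ℝ :=
    fun i p => (fderiv ℝ f (p.1 • p.2)) (Pi.single i 1) with hGdef
  have hGsm : ∀ i, ContDiffOn ℝ ∞ (G i) V := by
    intro i
    apply ContDiffOn.clm_apply
    · exact hfd.comp ((contDiff_fst.smul contDiff_snd).contDiffOn) (fun p hp => hp)
    · exact contDiffOn_const
  set g : Fin n → (Fin n → ℝ) → ℝ := fun i x => ∫ t in (0:ℝ)..1, G i (t, x) with hgdef
  have hg : ∀ i, ContDiffOn ℝ ∞ (g i) U := fun i => lemB hVopen (hGsm i) hU hsubV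
  set gg : Fin n → (Fin n → ℝ) → ℝ :=
    fun i x => if x ∈ U then g i x else x i * f x / ∑ j, (x j) ^ 2 with hggdef
  have hgg : ∀ i, ContDiffOn ℝ ∞ (gg i) U :=
    fun i => (hg i).congr fun x hx => if_pos hx
  have hgg0 : ∀ i, gg i 0 = 0 := by
    intro i
    have : g i 0 = 0 := by
      have : ∀ t : ℝ, G i (t, (0 : Fin n → ℝ)) = 0 := by
        intro t
        show (fderiv ℝ f (t • (0 : Fin n → ℝ))) (Pi.single i 1) = 0
        rw [smul_zero, hdf0]
        simp
      simp [g, this]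
    simp only [gg, if_pos hU0, this]
  -- the Hadamard identity
  have hid : f = ∑ i : Fin n, (fun x : Fin n → ℝ => x i) * gg i := by
    funext x
    rw [Finset.sum_apply]
    simp only [Pi.mul_apply]
    by_cases hx : x ∈ U
    · have hgge : ∀ i, gg i x = g i x := fun i => if_pos hx
      simp only [hgge]
      -- FTC
      have hcont : ∀ i, ContinuousOn (fun t => G i (t, x)) (Icc (0:ℝ) 1) := by
        intro i
        apply (hGsm i).continuousOn.comp (Continuous.continuousOn (by fun_prop))
        intro t ht
        exact hsubV x hx t ht
      have hder1 : ∀ t ∈ uIcc (0:ℝ) 1,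
          HasDerivAt (fun s => f (s • x)) ((fderiv ℝ f (t • x)) x) t := by
        intro t ht
        rw [uIcc_of_le zero_le_one] at ht
        have hmem : t • x ∈ U := by simpa [V] using hsubV x hx t ht
        have hdAt : DifferentiableAt ℝ f (t • x) :=
          (hf.differentiableOn (by norm_num)).differentiableAt (hU.mem_nhds hmem)
        have h2 : HasDerivAt (fun s : ℝ => s • x) x t := by
          simpa using (hasDerivAt_id t).smul_const x
        exact hdAt.hasFDerivAt.comp_hasDerivAt t h2
      have hcontL : ContinuousOn (fun t => (fderiv ℝ f (t • x)) x) (uIcc (0:ℝ) 1) := by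
        rw [uIcc_of_le zero_le_one]
        have h1 : ContinuousOn (fun t : ℝ => fderiv ℝ f (t • x)) (Icc (0:ℝ) 1) := by
          apply hfd.continuousOn.comp (Continuous.continuousOn (by fun_prop))
          intro t ht
          simpa [V] using hsubV x hx t ht
        exact (ContinuousLinearMap.apply ℝ ℝ x).continuous.comp_continuousOn h1
      have hint : IntervalIntegrable (fun t => (fderiv ℝ f (t • x)) x) volume 0 1 := by
        apply ContinuousOn.intervalIntegrable
        exact hcontL
      have hFTC : ∫ t in (0:ℝ)..1, (fderiv ℝ f (t • x)) x = f x := by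
        rw [intervalIntegral.integral_eq_sub_of_hasDerivAt hder1 hint]
        simp [hf0]
      have hx' : x = ∑ i, x i • (Pi.single i (1:ℝ) : Fin n → ℝ) := by
        funext j
        rw [Finset.sum_apply]
        simp [Pi.single_apply]
      have hexp : ∀ t : ℝ, (fderiv ℝ f (t • x)) x = ∑ i, x i * G i (t, x) := by
        intro t
        calc (fderiv ℝ f (t • x)) x
            = (fderiv ℝ f (t • x)) (∑ i, x i • (Pi.single i (1:ℝ) : Fin n → ℝ)) := by
              rw [← hx']
          _ = ∑ i, x i * G i (t, x) := by
              rw [map_sum]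
              exact Finset.sum_congr rfl fun i _ => by rw [(fderiv ℝ f (t • x)).map_smul]; rfl
      rw [← hFTC]
      have : (fun t => (fderiv ℝ f (t • x)) x) = fun t => ∑ i, x i * G i (t, x) :=
        funext hexp
      rw [this]
      rw [intervalIntegral.integral_finset_sum]
      · congr 1
        funext i
        rw [intervalIntegral.integral_const_mul]
      · intro i _
        apply ContinuousOn.intervalIntegrable
        rw [uIcc_of_le zero_le_one]
        exact continuousOn_const.mul (hcont i)
    · -- outside U
      have hxne : x ≠ 0 := fun h => hx (h ▸ hU0)
      have hggne : ∀ i, gg i x = x i * f x / ∑ j, (x j) ^ 2 := fun i => if_neg hx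
      simp only [hggne]
      have hS : (∑ j, (x j) ^ 2) ≠ 0 := by
        intro h
        apply hxne
        funext j
        have := (Finset.sum_eq_zero_iff_of_nonneg (fun j _ => sq_nonneg (x j))).1 h j
          (Finset.mem_univ j)
        exact pow_eq_zero_iff (n := 2) (by norm_num) |>.1 this
      simp only [← mul_div_assoc]
      rw [← Finset.sum_div]
      have h1 : ∑ i, x i * (x i * f x) = (∑ j, (x j) ^ 2) * f x := by
        rw [Finset.sum_mul]; exact Finset.sum_congr rfl fun i _ => by ring
      rw [h1, mul_comm, mul_div_assoc, div_self hS, mul_one]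
  -- algebra of the derivation
  have hD0 : D 0 = 0 := by
    have h := hsmul 0 0 contDiffOn_const
    simpa using h
  have hDsum : ∀ (s : Finset (Fin n)) (h : Fin n → ((Fin n → ℝ) → ℝ)),
      (∀ i, ContDiffOn ℝ ∞ (h i) U) → D (∑ i ∈ s, h i) = ∑ i ∈ s, D (h i) := by
    intro s
    induction s using Finset.induction with
    | empty => intro h hh; simpa using hD0
    | @insert a s ha ih =>
      intro h hh
      have hsum : ContDiffOn ℝ ∞ (∑ i ∈ s, h i) U := by
        have : ContDiffOn ℝ ∞ (fun x => ∑ i ∈ s, h i x) U :=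
          ContDiffOn.sum fun i _ => hh i
        apply this.congr
        intro x _
        simp [Finset.sum_apply]
      rw [Finset.sum_insert ha, hadd _ _ (hh a) hsum, ih h hh, Finset.sum_insert ha]
  have hproj : ∀ i, ContDiffOn ℝ ∞ (fun x : Fin n → ℝ => x i) U := by
    intro i
    exact (ContinuousLinearMap.proj (R := ℝ) (φ := fun _ : Fin n => ℝ) i).contDiff.contDiffOn
  rw [hid, hDsum Finset.univ (fun i => (fun x : Fin n → ℝ => x i) * gg i) (fun i => (hproj i).mul (hgg i))]
  apply Finset.sum_eq_zero
  intro i _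
  rw [hder _ _ (hproj i) (hgg i)]
  simp [hgg0 i]
end

section
/- (Lie–Poisson structure on the dual of a finite-dimensional Lie algebra; the finite-dimensional case of Section 3.1.) Let 𝔤 be a finite-dimensional real Lie algebra and 𝔤* its dual space. For a smooth function f : 𝔤* → ℝ and μ ∈ 𝔤*, let ∇f(μ) ∈ 𝔤 be the unique element with (Df)(μ)(ν) = ν(∇f(μ)) for all ν ∈ 𝔤*, obtained from the Fréchet derivative (Df)(μ) ∈ 𝔤** via the canonical isomorphism 𝔤 ≅ 𝔤**. Define {f,g}(μ) := μ([∇f(μ), ∇g(μ)]). Then {f,g} is again smooth, and {·,·} is a Poisson bracket on C^∞(𝔤*,ℝ): it is ℝ-bilinear, antisymmetric, satisfies the Leibniz rule {f,gh} = {f,g}h + g{f,h}, and satisfies the Jacobi identity {f,{g,h}} = {{f,g},h} + {g,{f,h}}. -/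
open scoped ContDiff

/-- The Lie–Poisson bracket `{f,g}(μ) = μ ⁅∇f(μ), ∇g(μ)⁆` on the dual of a
finite-dimensional real Lie algebra `(𝔤, L)`, where `∇f(μ) ∈ 𝔤` is characterized by
`ν (∇f(μ)) = Df(μ)(ν)` for all `ν ∈ 𝔤*`. -/
noncomputable def liePoissonBracket {𝔤 : Type*} [NormedAddCommGroup 𝔤] [NormedSpace ℝ 𝔤]
    (L : 𝔤 →ₗ[ℝ] 𝔤 →ₗ[ℝ] 𝔤)
    (grad : ((𝔤 →L[ℝ] ℝ) → ℝ) → (𝔤 →L[ℝ] ℝ) → 𝔤)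
    (f g : (𝔤 →L[ℝ] ℝ) → ℝ) : (𝔤 →L[ℝ] ℝ) → ℝ :=
  fun μ => μ (L (grad f μ) (grad g μ))

set_option maxHeartbeats 1000000 in
/-- On the dual of a finite-dimensional real Lie algebra, the Lie–Poisson bracket of two
smooth functions is smooth, and it is a Poisson bracket: bilinear, antisymmetric, Leibniz
and Jacobi. -/
theorem liePoisson_is_poisson_bracket
    {𝔤 : Type*} [NormedAddCommGroup 𝔤] [NormedSpace ℝ 𝔤] [FiniteDimensional ℝ 𝔤]
    (L : 𝔤 →ₗ[ℝ] 𝔤 →ₗ[ℝ] 𝔤)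
    (hLskew : ∀ x y : 𝔤, L x y = - L y x)
    (hLjacobi : ∀ x y z : 𝔤, L x (L y z) = L (L x y) z + L y (L x z))
    (grad : ((𝔤 →L[ℝ] ℝ) → ℝ) → (𝔤 →L[ℝ] ℝ) → 𝔤)
    (hgrad : ∀ (f : (𝔤 →L[ℝ] ℝ) → ℝ) (μ ν : 𝔤 →L[ℝ] ℝ), ν (grad f μ) = fderiv ℝ f μ ν) :
    (∀ f g, ContDiff ℝ ∞ f → ContDiff ℝ ∞ g →
      ContDiff ℝ ∞ (liePoissonBracket L grad f g)) ∧
    (∀ f₁ f₂ g, ContDiff ℝ ∞ f₁ → ContDiff ℝ ∞ f₂ → ContDiff ℝ ∞ g →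
      liePoissonBracket L grad (f₁ + f₂) g
        = liePoissonBracket L grad f₁ g + liePoissonBracket L grad f₂ g) ∧
    (∀ (c : ℝ) f g, ContDiff ℝ ∞ f → ContDiff ℝ ∞ g →
      liePoissonBracket L grad (c • f) g = c • liePoissonBracket L grad f g) ∧
    (∀ f g, ContDiff ℝ ∞ f → ContDiff ℝ ∞ g →
      liePoissonBracket L grad f g = - liePoissonBracket L grad g f) ∧
    (∀ f g h, ContDiff ℝ ∞ f → ContDiff ℝ ∞ g → ContDiff ℝ ∞ h →
      liePoissonBracket L grad f (g * h)
        = liePoissonBracket L grad f g * h + g * liePoissonBracket L grad f h) ∧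
    (∀ f g h, ContDiff ℝ ∞ f → ContDiff ℝ ∞ g → ContDiff ℝ ∞ h →
      liePoissonBracket L grad f (liePoissonBracket L grad g h)
        = liePoissonBracket L grad (liePoissonBracket L grad f g) h
          + liePoissonBracket L grad g (liePoissonBracket L grad f h)) := by
  classical
  have hone : (1 : WithTop ℕ∞) ≤ ∞ := WithTop.coe_le_coe.mpr le_top
  have htwo : (2 : WithTop ℕ∞) ≤ ∞ := by
    rw [show (2 : WithTop ℕ∞) = ((2 : ℕ∞) : WithTop ℕ∞) from rfl]
    exact WithTop.coe_le_coe.mpr le_top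
  -- extensionality via the separating dual
  have hext : ∀ x y : 𝔤, (∀ ν : 𝔤 →L[ℝ] ℝ, ν x = ν y) → x = y := by
    intro x y h
    by_contra hne
    obtain ⟨ν, hν⟩ := SeparatingDual.exists_separating_of_ne (R := ℝ) hne
    exact hν (h ν)
  -- the continuous bilinear version of `L`
  set Lc : 𝔤 →L[ℝ] 𝔤 →L[ℝ] 𝔤 := LinearMap.toContinuousLinearMap
    { toFun := fun x => LinearMap.toContinuousLinearMap (L x)
      map_add' := by intro x y; ext z; simp
      map_smul' := by intro c x; ext z; simp } with hLcdef
  have hLc : ∀ x y : 𝔤, Lc x y = L x y := by intro x y; simp [hLcdef]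
  -- representation of the bracket via `Lc`
  have hBrep : ∀ p q, liePoissonBracket L grad p q
      = fun μ : 𝔤 →L[ℝ] ℝ => μ (Lc (grad p μ) (grad q μ)) := by
    intro p q; funext μ; simp [liePoissonBracket, hLc]
  -- pointwise skew-symmetry under `μ`
  have hskewμ : ∀ (μ : 𝔤 →L[ℝ] ℝ) (a b : 𝔤), μ (Lc a b) = - μ (Lc b a) := by
    intro μ a b; rw [hLc, hLc, hLskew a b, map_neg]
  -- the canonical map into the double dual and a continuous left inverse
  set ι : 𝔤 →L[ℝ] ((𝔤 →L[ℝ] ℝ) →L[ℝ] ℝ) := ContinuousLinearMap.apply ℝ ℝ with hι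
  have hιinj : LinearMap.ker (ι.toLinearMap) = ⊥ := by
    rw [LinearMap.ker_eq_bot (M := 𝔤) (M₂ := (𝔤 →L[ℝ] ℝ) →L[ℝ] ℝ)]
    intro x y hxy
    exact hext x y fun ν => by
      have := congrFun (congrArg DFunLike.coe hxy) ν
      simpa [hι] using this
  obtain ⟨R, hR⟩ := LinearMap.exists_leftInverse_of_injective (K := ℝ) (V := 𝔤)
    (V' := (𝔤 →L[ℝ] ℝ) →L[ℝ] ℝ) ι.toLinearMap hιinj
  set Rc : ((𝔤 →L[ℝ] ℝ) →L[ℝ] ℝ) →L[ℝ] 𝔤 := LinearMap.toContinuousLinearMap (𝕜 := ℝ)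
    (E := (𝔤 →L[ℝ] ℝ) →L[ℝ] ℝ) (F' := 𝔤) R with hRcdef
  have hGR : ∀ (f : (𝔤 →L[ℝ] ℝ) → ℝ) (μ : 𝔤 →L[ℝ] ℝ), grad f μ = Rc (fderiv ℝ f μ) := by
    intro f μ
    have h1 : ι (grad f μ) = fderiv ℝ f μ := by
      ext ν; simpa [hι] using hgrad f μ ν
    have h2 : R (ι (grad f μ)) = grad f μ := by
      have := congrFun (congrArg DFunLike.coe hR) (grad f μ)
      simpa using this
    rw [hRcdef]
    simp [← h1, h2]
  -- smoothness of the gradient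
  have hGsmooth : ∀ (f : (𝔤 →L[ℝ] ℝ) → ℝ), ContDiff ℝ ∞ f → ContDiff ℝ ∞ (grad f) := by
    intro f hf
    have : grad f = fun μ => Rc (fderiv ℝ f μ) := funext fun μ => hGR f μ
    rw [this]
    exact Rc.contDiff.comp (hf.fderiv_right (m := ∞) le_rfl)
  -- differentiability of the gradient
  have hGdiff : ∀ (f : (𝔤 →L[ℝ] ℝ) → ℝ), ContDiff ℝ ∞ f → ∀ μ,
      HasFDerivAt (grad f) (fderiv ℝ (grad f) μ) μ := by
    intro f hf μ
    exact (((hGsmooth f hf).differentiable (by simp)) μ).hasFDerivAt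
  -- evaluation of the derivative of the gradient: it is the second derivative
  have hDG : ∀ (f : (𝔤 →L[ℝ] ℝ) → ℝ), ContDiff ℝ ∞ f → ∀ (μ ν ν' : 𝔤 →L[ℝ] ℝ),
      ν' (fderiv ℝ (grad f) μ ν) = fderiv ℝ (fderiv ℝ f) μ ν ν' := by
    intro f hf μ ν ν'
    have hfd : ContDiff ℝ ∞ (fderiv ℝ f) := hf.fderiv_right (m := ∞) le_rfl
    have h1 : HasFDerivAt (fun μ => ν' (grad f μ)) (ν'.comp (fderiv ℝ (grad f) μ)) μ :=
      ν'.hasFDerivAt.comp μ (hGdiff f hf μ)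
    have h2 : HasFDerivAt (fun μ => fderiv ℝ f μ ν')
        ((ContinuousLinearMap.apply ℝ ℝ ν').comp (fderiv ℝ (fderiv ℝ f) μ)) μ := by
      have := (ContinuousLinearMap.apply ℝ ℝ ν').hasFDerivAt.comp μ
        ((hfd.differentiable (by simp)) μ).hasFDerivAt
      simpa [Function.comp_def] using this
    have heq : (fun μ => ν' (grad f μ)) = fun μ => fderiv ℝ f μ ν' :=
      funext fun μ => hgrad f μ ν'
    rw [heq] at h1
    have := h1.unique h2
    calc ν' (fderiv ℝ (grad f) μ ν) = (ν'.comp (fderiv ℝ (grad f) μ)) ν := rfl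
      _ = ((ContinuousLinearMap.apply ℝ ℝ ν').comp (fderiv ℝ (fderiv ℝ f) μ)) ν := by rw [this]
      _ = fderiv ℝ (fderiv ℝ f) μ ν ν' := rfl
  -- symmetry of the second derivative
  have hsym : ∀ (f : (𝔤 →L[ℝ] ℝ) → ℝ), ContDiff ℝ ∞ f → ∀ (μ ν ν' : 𝔤 →L[ℝ] ℝ),
      ν' (fderiv ℝ (grad f) μ ν) = ν (fderiv ℝ (grad f) μ ν') := by
    intro f hf μ ν ν'
    rw [hDG f hf μ ν ν', hDG f hf μ ν' ν]
    exact hf.contDiffAt.isSymmSndFDerivAt (by simpa using htwo) ν ν'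
  -- smoothness of the bracket
  have hBs : ∀ (f g : (𝔤 →L[ℝ] ℝ) → ℝ), ContDiff ℝ ∞ f → ContDiff ℝ ∞ g →
      ContDiff ℝ ∞ (liePoissonBracket L grad f g) := by
    intro f g hf hg
    rw [hBrep]
    exact contDiff_id.clm_apply ((Lc.contDiff.comp (hGsmooth f hf)).clm_apply (hGsmooth g hg))
  -- derivative of the bracket
  have hDB : ∀ (f g : (𝔤 →L[ℝ] ℝ) → ℝ), ContDiff ℝ ∞ f → ContDiff ℝ ∞ g → ∀ (μ ν : 𝔤 →L[ℝ] ℝ),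
      fderiv ℝ (liePoissonBracket L grad f g) μ ν
        = ν (Lc (grad f μ) (grad g μ))
          + μ (Lc (fderiv ℝ (grad f) μ ν) (grad g μ))
          + μ (Lc (grad f μ) (fderiv ℝ (grad g) μ ν)) := by
    intro f g hf hg μ ν
    rw [hBrep]
    have h1 : HasFDerivAt (fun μ : 𝔤 →L[ℝ] ℝ => Lc (grad f μ))
        (Lc.comp (fderiv ℝ (grad f) μ)) μ := by
      have := Lc.hasFDerivAt.comp μ (hGdiff f hf μ)
      simpa [Function.comp_def] using this
    have h2 : HasFDerivAt (fun μ : 𝔤 →L[ℝ] ℝ => Lc (grad f μ) (grad g μ))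
        ((Lc (grad f μ)).comp (fderiv ℝ (grad g) μ)
          + (Lc.comp (fderiv ℝ (grad f) μ)).flip (grad g μ)) μ :=
      h1.clm_apply (hGdiff g hg μ)
    have h3 : HasFDerivAt (fun μ : 𝔤 →L[ℝ] ℝ => μ (Lc (grad f μ) (grad g μ)))
        (μ.comp ((Lc (grad f μ)).comp (fderiv ℝ (grad g) μ)
            + (Lc.comp (fderiv ℝ (grad f) μ)).flip (grad g μ))
          + (ContinuousLinearMap.id ℝ (𝔤 →L[ℝ] ℝ)).flip (Lc (grad f μ) (grad g μ))) μ :=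
      (hasFDerivAt_id μ).clm_apply h2
    rw [h3.fderiv]
    simp only [ContinuousLinearMap.add_apply, ContinuousLinearMap.comp_apply,
      ContinuousLinearMap.flip_apply, ContinuousLinearMap.coe_id', id_eq, map_add]
    ring
  -- the bracket as a directional derivative
  have key1 : ∀ (p q : (𝔤 →L[ℝ] ℝ) → ℝ) (μ : 𝔤 →L[ℝ] ℝ),
      liePoissonBracket L grad p q μ = fderiv ℝ q μ (μ.comp (Lc (grad p μ))) := by
    intro p q μ
    rw [← hgrad q μ (μ.comp (Lc (grad p μ)))]
    simp [liePoissonBracket, hLc]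
  -- pointwise antisymmetry
  have hAS : ∀ (p q : (𝔤 →L[ℝ] ℝ) → ℝ) (μ : 𝔤 →L[ℝ] ℝ),
      liePoissonBracket L grad p q μ = - liePoissonBracket L grad q p μ := by
    intro p q μ
    simp only [liePoissonBracket]
    rw [hLskew (grad p μ) (grad q μ), map_neg]
  refine ⟨hBs, ?_, ?_, ?_, ?_, ?_⟩
  · -- additivity
    intro f₁ f₂ g hf₁ hf₂ hg
    funext μ
    have hgr : grad (f₁ + f₂) μ = grad f₁ μ + grad f₂ μ := by
      apply hext
      intro ν
      rw [hgrad, map_add, hgrad, hgrad]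
      have : fderiv ℝ (f₁ + f₂) μ = fderiv ℝ f₁ μ + fderiv ℝ f₂ μ :=
        fderiv_add ((hf₁.differentiable (by simp)) μ) ((hf₂.differentiable (by simp)) μ)
      rw [this, ContinuousLinearMap.add_apply]
    simp only [liePoissonBracket, Pi.add_apply, hgr, map_add,
      LinearMap.add_apply]
  · -- homogeneity
    intro c f g hf hg
    funext μ
    have hgr : grad (c • f) μ = c • grad f μ := by
      apply hext
      intro ν
      rw [hgrad, map_smul, hgrad]
      have : fderiv ℝ (c • f) μ = c • fderiv ℝ f μ :=
        fderiv_const_smul ((hf.differentiable (by simp)) μ) c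
      rw [this, ContinuousLinearMap.smul_apply]
    simp only [liePoissonBracket, Pi.smul_apply, hgr, map_smul,
      LinearMap.smul_apply, smul_eq_mul]
  · -- antisymmetry
    intro f g hf hg
    funext μ
    simpa using hAS f g μ
  · -- Leibniz
    intro f g h hf hg hh
    funext μ
    have hgr : grad (g * h) μ = h μ • grad g μ + g μ • grad h μ := by
      apply hext
      intro ν
      rw [hgrad, map_add, map_smul, map_smul, hgrad, hgrad]
      have : fderiv ℝ (g * h) μ = g μ • fderiv ℝ h μ + h μ • fderiv ℝ g μ :=
        fderiv_mul ((hg.differentiable (by simp)) μ) ((hh.differentiable (by simp)) μ)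
      rw [this]
      simp [smul_eq_mul]
      ring
    simp only [liePoissonBracket, Pi.add_apply, Pi.mul_apply, hgr, map_add, map_smul,
      LinearMap.add_apply, LinearMap.smul_apply, smul_eq_mul]
    ring
  · -- Jacobi identity
    intro f g h hf hg hh
    funext μ
    set Gf := grad f μ with hGf
    set Gg := grad g μ with hGg
    set Gh := grad h μ with hGh
    set θf : 𝔤 →L[ℝ] ℝ := μ.comp (Lc Gf) with hθf
    set θg : 𝔤 →L[ℝ] ℝ := μ.comp (Lc Gg) with hθg
    set θh : 𝔤 →L[ℝ] ℝ := μ.comp (Lc Gh) with hθh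
    set Df := fderiv ℝ (grad f) μ with hDf
    set Dg := fderiv ℝ (grad g) μ with hDg
    set Dh := fderiv ℝ (grad h) μ with hDh
    have hθfa : ∀ y : 𝔤, θf y = μ (Lc Gf y) := fun y => rfl
    have hθga : ∀ y : 𝔤, θg y = μ (Lc Gg y) := fun y => rfl
    have hθha : ∀ y : 𝔤, θh y = μ (Lc Gh y) := fun y => rfl
    -- expansion of the three iterated brackets
    have e1 : liePoissonBracket L grad f (liePoissonBracket L grad g h) μ
        = μ (Lc Gf (Lc Gg Gh)) + μ (Lc (Dg θf) Gh) + μ (Lc Gg (Dh θf)) := by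
      rw [key1 f (liePoissonBracket L grad g h) μ, hDB g h hg hh μ θf]
      rw [hθfa]
    have e2 : liePoissonBracket L grad (liePoissonBracket L grad f g) h μ
        = -(μ (Lc Gh (Lc Gf Gg)) + μ (Lc (Df θh) Gg) + μ (Lc Gf (Dg θh))) := by
      rw [hAS (liePoissonBracket L grad f g) h μ,
        key1 h (liePoissonBracket L grad f g) μ, hDB f g hf hg μ θh]
      rw [hθha]
    have e3 : liePoissonBracket L grad g (liePoissonBracket L grad f h) μ
        = μ (Lc Gg (Lc Gf Gh)) + μ (Lc (Df θg) Gh) + μ (Lc Gf (Dh θg)) := by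
      rw [key1 g (liePoissonBracket L grad f h) μ, hDB f h hf hh μ θg]
      rw [hθga]
    -- symmetry swaps for the second-order terms
    have s1 : μ (Lc Gh (Dg θf)) = μ (Lc Gf (Dg θh)) := by
      have := hsym g hg μ θf θh
      rw [← hDg] at this
      simpa [hθfa, hθha] using this
    have s2 : μ (Lc Gg (Dh θf)) = μ (Lc Gf (Dh θg)) := by
      have := hsym h hh μ θf θg
      rw [← hDh] at this
      simpa [hθfa, hθga] using this
    have s3 : μ (Lc Gg (Df θh)) = μ (Lc Gh (Df θg)) := by
      have := hsym f hf μ θh θg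
      rw [← hDf] at this
      simpa [hθga, hθha] using this
    -- skew-symmetry rewrites
    have k1 : μ (Lc (Dg θf) Gh) = - μ (Lc Gh (Dg θf)) := hskewμ μ _ _
    have k2 : μ (Lc (Df θh) Gg) = - μ (Lc Gg (Df θh)) := hskewμ μ _ _
    have k3 : μ (Lc (Df θg) Gh) = - μ (Lc Gh (Df θg)) := hskewμ μ _ _
    -- first-order (Jacobi) identity
    have jac : μ (Lc Gf (Lc Gg Gh))
        = - μ (Lc Gh (Lc Gf Gg)) + μ (Lc Gg (Lc Gf Gh)) := by
      have hj : μ (Lc Gf (Lc Gg Gh))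
          = μ (Lc (Lc Gf Gg) Gh) + μ (Lc Gg (Lc Gf Gh)) := by
        simp only [hLc]
        rw [hLjacobi Gf Gg Gh, map_add]
      rw [hj, hskewμ μ (Lc Gf Gg) Gh]
    rw [Pi.add_apply, e1, e2, e3]
    rw [k1, k2, k3, s1, s2, s3, jac]
    ring
end

section
/- (The Lie algebra of Schwartz vector fields, as used in Section 3.2 for 𝔛_𝒮(ℝⁿ).) For X, Y ∈ 𝒮(ℝⁿ, ℝⁿ) (Schwartz maps from ℝⁿ to ℝⁿ), the map [X,Y] : ℝⁿ → ℝⁿ defined by [X,Y](x) = (DY)(x)(X(x)) − (DX)(x)(Y(x)) is again a Schwartz map, the bracket (X,Y) ↦ [X,Y] is ℝ-bilinear and jointly continuous as a map 𝒮(ℝⁿ,ℝⁿ) × 𝒮(ℝⁿ,ℝⁿ) → 𝒮(ℝⁿ,ℝⁿ), it is antisymmetric, and it satisfies the Jacobi identity [X,[Y,Z]] = [[X,Y],Z] + [Y,[X,Z]]; hence it makes 𝒮(ℝⁿ,ℝⁿ) a topological Lie algebra. -/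
open SchwartzMap Finset

variable {V W : Type*} [NormedAddCommGroup V] [NormedSpace ℝ V]
  [NormedAddCommGroup W] [NormedSpace ℝ W]

namespace SchwartzLieAux

lemma schwartz_tg (f : SchwartzMap V W) : Function.HasTemperateGrowth f :=
  ⟨f.smooth', fun m => ⟨0, SchwartzMap.seminorm ℝ 0 m f, fun x => by
    simpa using SchwartzMap.norm_iteratedFDeriv_le_seminorm ℝ f m x⟩⟩

lemma fderiv_tg (f : SchwartzMap V W) :
    Function.HasTemperateGrowth (fun x => fderiv ℝ f x) := by
  have h := schwartz_tg (SchwartzMap.fderivCLM ℝ V W f)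
  have e : ⇑(SchwartzMap.fderivCLM ℝ V W f) = fun x => fderiv ℝ f x := by
    funext x; exact SchwartzMap.fderivCLM_apply ℝ f x
  rwa [e] at h

/-- `A X Y = (x ↦ DY(x)(X(x)))` as a Schwartz map. -/
noncomputable def A (X Y : SchwartzMap V V) : SchwartzMap V V :=
  SchwartzMap.bilinLeftCLM (ContinuousLinearMap.apply ℝ V) (fderiv_tg Y) X

@[simp] lemma A_apply (X Y : SchwartzMap V V) (x : V) :
    A X Y x = fderiv ℝ Y x (X x) := rfl

lemma A_add_left (X₁ X₂ Y : SchwartzMap V V) : A (X₁ + X₂) Y = A X₁ Y + A X₂ Y := by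
  ext x; simp [A_apply]

lemma A_smul_left (c : ℝ) (X Y : SchwartzMap V V) : A (c • X) Y = c • A X Y := by
  ext x; simp [A_apply]

lemma coe_add' (Y₁ Y₂ : SchwartzMap V V) : ⇑(Y₁ + Y₂) = fun x => Y₁ x + Y₂ x := rfl

lemma A_add_right (X Y₁ Y₂ : SchwartzMap V V) : A X (Y₁ + Y₂) = A X Y₁ + A X Y₂ := by
  ext x
  simp only [A_apply, SchwartzMap.add_apply, coe_add']
  rw [fderiv_fun_add (Y₁.differentiable.differentiableAt) (Y₂.differentiable.differentiableAt)]
  simp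

lemma A_smul_right (c : ℝ) (X Y : SchwartzMap V V) : A X (c • Y) = c • A X Y := by
  ext x
  have e : ⇑(c • Y) = fun x => c • Y x := rfl
  simp only [A_apply, SchwartzMap.smul_apply, e]
  rw [fderiv_fun_const_smul (Y.differentiable.differentiableAt) c]
  simp

lemma A_sub_left (X₁ X₂ Y : SchwartzMap V V) : A (X₁ - X₂) Y = A X₁ Y - A X₂ Y := by
  ext x; simp [A_apply, SchwartzMap.sub_apply]

lemma A_sub_right (X Y₁ Y₂ : SchwartzMap V V) : A X (Y₁ - Y₂) = A X Y₁ - A X Y₂ := by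
  have h := A_add_right X (Y₁ - Y₂) Y₂
  rw [sub_add_cancel] at h
  rw [h]; abel

lemma A_bound_gen {W : Type*} [NormedAddCommGroup W] [NormedSpace ℝ W]
    (B : V →L[ℝ] W →L[ℝ] V) (k m : ℕ) :
    ∃ C : ℝ, 0 ≤ C ∧ ∀ (X Y : SchwartzMap V V) (g : V → W), ContDiff ℝ (⊤ : ℕ∞) g →
      (∀ (i : ℕ) (x : V), ‖iteratedFDeriv ℝ i g x‖ = ‖iteratedFDeriv ℝ (i + 1) (⇑Y) x‖) →
      ∀ x : V, ‖x‖ ^ k * ‖iteratedFDeriv ℝ m (fun y => B (X y) (g y)) x‖ ≤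
        C * ((Finset.Iic (k, m)).sup (schwartzSeminormFamily ℝ V V)) X *
          ((Finset.Iic (k, m + 1)).sup (schwartzSeminormFamily ℝ V V)) Y := by
  refine ⟨‖B‖ * 2 ^ m * 2 ^ k, by positivity, fun X Y g hg hgY x => ?_⟩
  set P := ((Finset.Iic (k, m)).sup (schwartzSeminormFamily ℝ V V)) X with hP
  set Q := ((Finset.Iic (k, m + 1)).sup (schwartzSeminormFamily ℝ V V)) Y with hQ
  have hP0 : 0 ≤ P := apply_nonneg _ _
  have hQ0 : 0 ≤ Q := apply_nonneg _ _
  have h1 := B.norm_iteratedFDeriv_le_of_bilinear X.smooth' hg x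
    (n := m) (by exact_mod_cast le_top)
  calc ‖x‖ ^ k * ‖iteratedFDeriv ℝ m (fun y => B (X y) (g y)) x‖
      ≤ ‖x‖ ^ k * (‖B‖ * ∑ i ∈ Finset.range (m + 1), (m.choose i : ℝ) *
          ‖iteratedFDeriv ℝ i X x‖ * ‖iteratedFDeriv ℝ (m - i) g x‖) := by
        exact mul_le_mul_of_nonneg_left h1 (by positivity)
    _ = ‖B‖ * ∑ i ∈ Finset.range (m + 1), (m.choose i : ℝ) *
          (‖x‖ ^ k * ‖iteratedFDeriv ℝ i X x‖) * ‖iteratedFDeriv ℝ (m - i) g x‖ := by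
        simp_rw [Finset.mul_sum]
        apply Finset.sum_congr rfl
        intro i _
        ring
    _ ≤ ‖B‖ * ∑ i ∈ Finset.range (m + 1), (m.choose i : ℝ) * (2 ^ k * P) * Q := by
        refine mul_le_mul_of_nonneg_left (Finset.sum_le_sum fun i hi => ?_) (norm_nonneg B)
        have hi' : i ≤ m := Nat.lt_succ_iff.mp (Finset.mem_range.mp hi)
        have b1 : ‖x‖ ^ k * ‖iteratedFDeriv ℝ i X x‖ ≤ 2 ^ k * P := by
          refine le_trans ?_ (SchwartzMap.one_add_le_sup_seminorm_apply
            (𝕜 := ℝ) (m := (k, m)) le_rfl hi' X x)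
          apply mul_le_mul_of_nonneg_right _ (norm_nonneg _)
          exact pow_le_pow_left₀ (norm_nonneg x) (by linarith [norm_nonneg x]) k
        have b2 : ‖iteratedFDeriv ℝ (m - i) g x‖ ≤ Q := by
          rw [hgY]
          refine le_trans (SchwartzMap.norm_iteratedFDeriv_le_seminorm ℝ Y (m - i + 1) x) ?_
          have hmem : ((0 : ℕ), m - i + 1) ∈ Finset.Iic (k, m + 1) := by
            simp only [Finset.mem_Iic, Prod.mk_le_mk]
            exact ⟨Nat.zero_le _, by omega⟩
          exact Finset.le_sup (f := schwartzSeminormFamily ℝ V V) hmem Y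
        refine mul_le_mul (mul_le_mul_of_nonneg_left b1 (Nat.cast_nonneg _)) b2
          (norm_nonneg _) (by positivity)
    _ = ‖B‖ * 2 ^ m * 2 ^ k * P * Q := by
        rw [← Finset.sum_mul, ← Finset.sum_mul, ← Nat.cast_sum, Nat.sum_range_choose]
        push_cast
        ring

lemma A_bound (k m : ℕ) : ∃ C : ℝ, 0 ≤ C ∧ ∀ X Y : SchwartzMap V V,
    SchwartzMap.seminorm ℝ k m (A X Y) ≤
      C * ((Finset.Iic (k, m)).sup (schwartzSeminormFamily ℝ V V)) X *
        ((Finset.Iic (k, m + 1)).sup (schwartzSeminormFamily ℝ V V)) Y := by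
  obtain ⟨C, hC0, hC⟩ := A_bound_gen (V := V) (ContinuousLinearMap.apply ℝ V) k m
  refine ⟨C, hC0, fun X Y => ?_⟩
  have hP0 : (0:ℝ) ≤ ((Finset.Iic (k, m)).sup (schwartzSeminormFamily ℝ V V)) X :=
    apply_nonneg _ _
  have hQ0 : (0:ℝ) ≤ ((Finset.Iic (k, m + 1)).sup (schwartzSeminormFamily ℝ V V)) Y :=
    apply_nonneg _ _
  apply SchwartzMap.seminorm_le_bound ℝ k m _ (by positivity)
  intro x
  exact hC X Y (fun y => fderiv ℝ Y y) (fderiv_tg Y).1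
    (fun i x => norm_iteratedFDeriv_fderiv) x

/-- The Lie bracket of Schwartz vector fields. -/
noncomputable def bkt (X Y : SchwartzMap V V) : SchwartzMap V V := A X Y - A Y X

lemma bkt_apply (X Y : SchwartzMap V V) (x : V) :
    bkt X Y x = fderiv ℝ Y x (X x) - fderiv ℝ X x (Y x) := rfl

lemma continuous_A : Continuous (fun p : SchwartzMap V V × SchwartzMap V V => A p.1 p.2) := by
  rw [continuous_iff_continuousAt]
  rintro ⟨X₀, Y₀⟩
  rw [ContinuousAt, (schwartz_withSeminorms ℝ V V).tendsto_nhds _ (A X₀ Y₀)]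
  rintro ⟨k, m⟩ ε hε
  obtain ⟨C, hC0, hC⟩ := A_bound (V := V) k m
  set P : Seminorm ℝ (SchwartzMap V V) :=
    (Finset.Iic (k, m)).sup (schwartzSeminormFamily ℝ V V) with hPdef
  set Q : Seminorm ℝ (SchwartzMap V V) :=
    (Finset.Iic (k, m + 1)).sup (schwartzSeminormFamily ℝ V V) with hQdef
  set D : ℝ := C * (Q Y₀ + 1) + C * P X₀ + 1 with hD
  have hD0 : 0 < D := by positivity
  set δ : ℝ := min 1 (ε / D) with hδ
  have hδ0 : 0 < δ := lt_min one_pos (div_pos hε hD0)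
  have hδ1 : δ ≤ 1 := min_le_left _ _
  have h1 := ((schwartz_withSeminorms ℝ V V).tendsto_nhds' (Prod.fst) X₀).mp
    (continuousAt_fst (p := (X₀, Y₀))) (Finset.Iic (k, m)) δ hδ0
  have h2 := ((schwartz_withSeminorms ℝ V V).tendsto_nhds' (Prod.snd) Y₀).mp
    (continuousAt_snd (p := (X₀, Y₀))) (Finset.Iic (k, m + 1)) δ hδ0
  filter_upwards [h1, h2] with p hp1 hp2
  have decomp : A p.1 p.2 - A X₀ Y₀ = A (p.1 - X₀) p.2 + A X₀ (p.2 - Y₀) := by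
    rw [A_sub_left, A_sub_right]; abel
  have hQp2 : Q p.2 ≤ Q Y₀ + 1 := by
    have h3 : Q p.2 ≤ Q (p.2 - Y₀) + Q Y₀ := by
      have := map_add_le_add Q (p.2 - Y₀) Y₀
      rwa [sub_add_cancel] at this
    linarith
  have key : schwartzSeminormFamily ℝ V V (k, m) (A p.1 p.2 - A X₀ Y₀) ≤
      C * δ * (Q Y₀ + 1) + C * P X₀ * δ := by
    rw [decomp]
    calc schwartzSeminormFamily ℝ V V (k, m) (A (p.1 - X₀) p.2 + A X₀ (p.2 - Y₀))
        ≤ schwartzSeminormFamily ℝ V V (k, m) (A (p.1 - X₀) p.2) +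
          schwartzSeminormFamily ℝ V V (k, m) (A X₀ (p.2 - Y₀)) := map_add_le_add _ _ _
      _ ≤ C * P (p.1 - X₀) * Q p.2 + C * P X₀ * Q (p.2 - Y₀) := by
          rw [schwartzSeminormFamily_apply]
          exact add_le_add (hC _ _) (hC _ _)
      _ ≤ C * δ * (Q Y₀ + 1) + C * P X₀ * δ := by
          refine add_le_add ?_ ?_
          · exact mul_le_mul (mul_le_mul_of_nonneg_left hp1.le hC0) hQp2
              (apply_nonneg _ _) (by positivity)
          · exact mul_le_mul_of_nonneg_left hp2.le (by positivity)
  have last : C * δ * (Q Y₀ + 1) + C * P X₀ * δ < ε := by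
    have e1 : C * δ * (Q Y₀ + 1) + C * P X₀ * δ = δ * (D - 1) := by
      rw [hD]; ring
    have e2 : δ * (D - 1) < δ * D := by nlinarith
    have e3 : δ * D ≤ ε := by
      calc δ * D ≤ (ε / D) * D := mul_le_mul_of_nonneg_right (min_le_right _ _) hD0.le
        _ = ε := div_mul_cancel₀ ε hD0.ne'
    linarith
  exact lt_of_le_of_lt key last

lemma continuous_bkt :
    Continuous (fun p : SchwartzMap V V × SchwartzMap V V => bkt p.1 p.2) := by
  have : (fun p : SchwartzMap V V × SchwartzMap V V => bkt p.1 p.2) =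
      (fun p : SchwartzMap V V × SchwartzMap V V => A p.1 p.2 - A p.2 p.1) := rfl
  rw [this]
  exact (continuous_A).sub (continuous_A.comp continuous_swap)

lemma fderiv_fderiv_diff (Y : SchwartzMap V V) :
    Differentiable ℝ (fderiv ℝ (⇑Y)) :=
  (Y.smooth'.fderiv_right (m := (⊤ : ℕ∞)) (by exact_mod_cast le_top)).differentiable
    (by simp)

lemma fderiv_bkt (Y Z : SchwartzMap V V) (x : V) :
    fderiv ℝ (⇑(bkt Y Z)) x =
      ((fderiv ℝ (⇑Z) x).comp (fderiv ℝ (⇑Y) x) + (fderiv ℝ (fderiv ℝ (⇑Z)) x).flip (Y x)) -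
      ((fderiv ℝ (⇑Y) x).comp (fderiv ℝ (⇑Z) x) + (fderiv ℝ (fderiv ℝ (⇑Y)) x).flip (Z x)) := by
  have e : ⇑(bkt Y Z) =
      fun y => (fun y => fderiv ℝ (⇑Z) y (Y y)) y - (fun y => fderiv ℝ (⇑Y) y (Z y)) y := rfl
  have d1 : DifferentiableAt ℝ (fun y => fderiv ℝ (⇑Z) y (Y y)) x :=
    ((fderiv_fderiv_diff Z).differentiableAt).clm_apply (Y.differentiable.differentiableAt)
  have d2 : DifferentiableAt ℝ (fun y => fderiv ℝ (⇑Y) y (Z y)) x :=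
    ((fderiv_fderiv_diff Y).differentiableAt).clm_apply (Z.differentiable.differentiableAt)
  rw [e, fderiv_fun_sub d1 d2,
    fderiv_clm_apply ((fderiv_fderiv_diff Z).differentiableAt) (Y.differentiable.differentiableAt),
    fderiv_clm_apply ((fderiv_fderiv_diff Y).differentiableAt) (Z.differentiable.differentiableAt)]

lemma snd_symm (Z : SchwartzMap V V) (x : V) (v w : V) :
    fderiv ℝ (fderiv ℝ (⇑Z)) x v w = fderiv ℝ (fderiv ℝ (⇑Z)) x w v :=
  second_derivative_symmetric (fun y => (Z.differentiable y).hasFDerivAt)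
    ((fderiv_fderiv_diff Z x).hasFDerivAt) v w

lemma jacobi (X Y Z : SchwartzMap V V) :
    bkt X (bkt Y Z) = bkt (bkt X Y) Z + bkt Y (bkt X Z) := by
  ext x
  rw [SchwartzMap.add_apply]
  simp only [bkt_apply]
  rw [fderiv_bkt, fderiv_bkt, fderiv_bkt]
  simp only [ContinuousLinearMap.sub_apply, ContinuousLinearMap.add_apply,
    ContinuousLinearMap.comp_apply, ContinuousLinearMap.flip_apply, bkt_apply, map_sub]
  rw [snd_symm Z x (Y x) (X x), snd_symm Y x (Z x) (X x), snd_symm X x (Z x) (Y x)]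
  abel

end SchwartzLieAux


/-- The bracket `[X,Y](x) = DY(x)(X(x)) - DX(x)(Y(x))` of Schwartz vector fields on `ℝⁿ`
is again Schwartz, is bilinear, jointly continuous, antisymmetric and satisfies the
Jacobi identity: it makes `𝓢(ℝⁿ,ℝⁿ)` a topological Lie algebra. -/
theorem schwartz_vector_fields_topological_lie_algebra (n : ℕ) :
    ∃ bkt : SchwartzMap (Fin n → ℝ) (Fin n → ℝ) → SchwartzMap (Fin n → ℝ) (Fin n → ℝ) →
        SchwartzMap (Fin n → ℝ) (Fin n → ℝ),
      (∀ X Y (x : Fin n → ℝ), bkt X Y x = fderiv ℝ Y x (X x) - fderiv ℝ X x (Y x)) ∧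
      (∀ X₁ X₂ Y, bkt (X₁ + X₂) Y = bkt X₁ Y + bkt X₂ Y) ∧
      (∀ (c : ℝ) X Y, bkt (c • X) Y = c • bkt X Y) ∧
      (∀ X Y₁ Y₂, bkt X (Y₁ + Y₂) = bkt X Y₁ + bkt X Y₂) ∧
      (∀ (c : ℝ) X Y, bkt X (c • Y) = c • bkt X Y) ∧
      Continuous (fun p : SchwartzMap (Fin n → ℝ) (Fin n → ℝ) ×
          SchwartzMap (Fin n → ℝ) (Fin n → ℝ) => bkt p.1 p.2) ∧
      (∀ X Y, bkt X Y = - bkt Y X) ∧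
      (∀ X Y Z, bkt X (bkt Y Z) = bkt (bkt X Y) Z + bkt Y (bkt X Z)) := by
  refine ⟨SchwartzLieAux.bkt, ?_, ?_, ?_, ?_, ?_, ?_, ?_, ?_⟩
  · exact fun X Y x => SchwartzLieAux.bkt_apply X Y x
  · intro X₁ X₂ Y
    show SchwartzLieAux.A (X₁ + X₂) Y - SchwartzLieAux.A Y (X₁ + X₂) = _
    rw [SchwartzLieAux.A_add_left, SchwartzLieAux.A_add_right]
    show _ = (SchwartzLieAux.A X₁ Y - SchwartzLieAux.A Y X₁) +
      (SchwartzLieAux.A X₂ Y - SchwartzLieAux.A Y X₂)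
    abel
  · intro c X Y
    show SchwartzLieAux.A (c • X) Y - SchwartzLieAux.A Y (c • X) = _
    rw [SchwartzLieAux.A_smul_left, SchwartzLieAux.A_smul_right]
    show _ = c • (SchwartzLieAux.A X Y - SchwartzLieAux.A Y X)
    rw [smul_sub]
  · intro X Y₁ Y₂
    show SchwartzLieAux.A X (Y₁ + Y₂) - SchwartzLieAux.A (Y₁ + Y₂) X = _
    rw [SchwartzLieAux.A_add_left, SchwartzLieAux.A_add_right]
    show _ = (SchwartzLieAux.A X Y₁ - SchwartzLieAux.A Y₁ X) +
      (SchwartzLieAux.A X Y₂ - SchwartzLieAux.A Y₂ X)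
    abel
  · intro c X Y
    show SchwartzLieAux.A X (c • Y) - SchwartzLieAux.A (c • Y) X = _
    rw [SchwartzLieAux.A_smul_left, SchwartzLieAux.A_smul_right]
    show _ = c • (SchwartzLieAux.A X Y - SchwartzLieAux.A Y X)
    rw [smul_sub]
  · exact SchwartzLieAux.continuous_bkt
  · intro X Y
    show SchwartzLieAux.A X Y - SchwartzLieAux.A Y X =
      -(SchwartzLieAux.A Y X - SchwartzLieAux.A X Y)
    rw [neg_sub]
  · exact SchwartzLieAux.jacobi
end
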